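/- arXiv:1908.00578 — 8 statements merged into one kernel-verified Lean document; each statement's English description precedes it below -/
import Mathlib

section
/- Let Ω ⊆ ℝⁿ be compact and star-shaped with respect to x* ∈ Ω, and let g : Ω → ℝ be continuous. Define w : Ω → ℝ by w(x) = min{ g(y) : y = x + t(x − x*) ∈ Ω, t ≥ 0 } for x ≠ x*, and w(x*) = min over Ω of g. Then w is star-shaped with respect to x*, and w equals the lower star-shaped envelope SS⁻(g) of g with respect to x*. -/
open Set

/-- A set `S` is star-shaped with respect to a point `c`. -/
def StarShapedSet {n : ℕ} (S : Set (EuclideanSpace ℝ (Fin n)))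
    (c : EuclideanSpace ℝ (Fin n)) : Prop :=
  ∀ x ∈ S, ∀ t ∈ Icc (0 : ℝ) 1, t • c + (1 - t) • x ∈ S

/-- A function `u` on `Ω` is star-shaped with respect to `c` if all of its
sublevel sets (within `Ω`) are star-shaped with respect to `c`. -/
def StarShapedFunOn {n : ℕ} (Ω : Set (EuclideanSpace ℝ (Fin n)))
    (u : EuclideanSpace ℝ (Fin n) → ℝ) (c : EuclideanSpace ℝ (Fin n)) : Prop :=
  ∀ α : ℝ, StarShapedSet {x ∈ Ω | u x ≤ α} c

/-- The lower star-shaped envelope `SS⁻(g)` of `g` with respect to `c` on `Ω`: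
the pointwise supremum of all star-shaped (w.r.t. `c`) functions lying below `g` on `Ω`. -/
noncomputable def lowerStarShapedEnv {n : ℕ} (Ω : Set (EuclideanSpace ℝ (Fin n)))
    (g : EuclideanSpace ℝ (Fin n) → ℝ) (c : EuclideanSpace ℝ (Fin n))
    (x : EuclideanSpace ℝ (Fin n)) : ℝ :=
  sSup {r : ℝ | ∃ v : EuclideanSpace ℝ (Fin n) → ℝ,
    StarShapedFunOn Ω v c ∧ (∀ y ∈ Ω, v y ≤ g y) ∧ v x = r}

theorem lowerStarShapedEnv_explicit {n : ℕ} (Ω : Set (EuclideanSpace ℝ (Fin n)))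
    (hΩc : IsCompact Ω) (xs : EuclideanSpace ℝ (Fin n)) (hxs : xs ∈ Ω)
    (hΩ : StarShapedSet Ω xs)
    (g : EuclideanSpace ℝ (Fin n) → ℝ) (hg : ContinuousOn g Ω)
    (w : EuclideanSpace ℝ (Fin n) → ℝ)
    (hw : ∀ x ∈ Ω, x ≠ xs →
      w x = sInf (g '' {y ∈ Ω | ∃ t : ℝ, 0 ≤ t ∧ y = x + t • (x - xs)}))
    (hwxs : w xs = sInf (g '' Ω)) :
    StarShapedFunOn Ω w xs ∧ ∀ x ∈ Ω, w x = lowerStarShapedEnv Ω g xs x := by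
  classical
  obtain ⟨p, hpΩ, hp'⟩ := hΩc.exists_isMinOn ⟨xs, hxs⟩ hg
  have hp : ∀ y ∈ Ω, g p ≤ g y := hp'
  set R : EuclideanSpace ℝ (Fin n) → Set (EuclideanSpace ℝ (Fin n)) :=
    fun x => {y ∈ Ω | ∃ t : ℝ, 0 ≤ t ∧ y = x + t • (x - xs)} with hR
  have hbdd : ∀ S ⊆ Ω, BddBelow (g '' S) := by
    rintro S hS
    exact ⟨g p, by rintro r ⟨y, hy, rfl⟩; exact hp y (hS hy)⟩
  have hself : ∀ x ∈ Ω, x ∈ R x := by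
    intro x hx
    exact ⟨hx, 0, le_refl 0, by simp⟩
  have hRsub : ∀ x, R x ⊆ Ω := fun x y hy => hy.1
  -- ray inclusion
  have hray : ∀ x, ∀ s : ℝ, 0 ≤ s → s < 1 → R x ⊆ R (s • xs + (1 - s) • x) := by
    rintro x s hs0 hs1 y ⟨hyΩ, t, ht0, rfl⟩
    have h1s : (0:ℝ) < 1 - s := by linarith
    refine ⟨hyΩ, (t + s) / (1 - s), by positivity, ?_⟩
    have hc : ((t + s) / (1 - s)) * (1 - s) = t + s := div_mul_cancel₀ _ (ne_of_gt h1s)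
    match_scalars <;> (field_simp; try ring)
  -- z = xs iff collapse
  have hzxs : ∀ x : EuclideanSpace ℝ (Fin n), (1:ℝ) • xs + (1 - 1 : ℝ) • x = xs := by
    intro x; module
  have hxxs : ∀ s : ℝ, s • xs + (1 - s) • xs = xs := by intro s; module
  -- monotonicity along rays
  have hmono : ∀ x ∈ Ω, ∀ s ∈ Icc (0:ℝ) 1, w (s • xs + (1 - s) • x) ≤ w x := by
    rintro x hx s ⟨hs0, hs1⟩
    by_cases hxeq : x = xs
    · subst hxeq
      rw [hxxs]
    by_cases hzeq : s • xs + (1 - s) • x = xs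
    · rw [hzeq, hwxs, hw x hx hxeq]
      exact csInf_le_csInf (hbdd Ω subset_rfl) ⟨g x, x, hself x hx, rfl⟩
        (image_mono (f := g) (hRsub x))
    · have hs1' : s < 1 := by
        rcases lt_or_eq_of_le hs1 with h | h
        · exact h
        · subst h; exact absurd (hzxs x) hzeq
      have hz : s • xs + (1 - s) • x ∈ Ω := hΩ x hx s ⟨hs0, hs1⟩
      rw [hw _ hz hzeq, hw x hx hxeq]
      exact csInf_le_csInf (hbdd _ (hRsub _)) ⟨g x, x, hself x hx, rfl⟩
        (image_mono (f := g) (hray x s hs0 hs1'))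
  have hstar : StarShapedFunOn Ω w xs := by
    rintro α x ⟨hxΩ, hwx⟩ t ht
    exact ⟨hΩ x hxΩ t ht, le_trans (hmono x hxΩ t ht) hwx⟩
  have hwleg : ∀ x ∈ Ω, w x ≤ g x := by
    intro x hx
    by_cases hxeq : x = xs
    · rw [hxeq, hwxs]
      exact csInf_le (hbdd Ω subset_rfl) ⟨xs, hxs, rfl⟩
    · rw [hw x hx hxeq]
      exact csInf_le (hbdd _ (hRsub x)) ⟨x, hself x hx, rfl⟩
  -- any admissible v is ≤ w
  have hC : ∀ v : EuclideanSpace ℝ (Fin n) → ℝ, StarShapedFunOn Ω v xs →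
      (∀ y ∈ Ω, v y ≤ g y) → ∀ x ∈ Ω, v x ≤ w x := by
    intro v hv hvg x hx
    by_cases hxeq : x = xs
    · rw [hxeq, hwxs]
      refine le_csInf ⟨g xs, xs, hxs, rfl⟩ ?_
      rintro b ⟨y, hy, rfl⟩
      have := hv (v y) y ⟨hy, le_refl _⟩ 1 ⟨zero_le_one, le_refl 1⟩
      rw [hzxs] at this
      exact le_trans this.2 (hvg y hy)
    · rw [hw x hx hxeq]
      refine le_csInf ⟨g x, x, hself x hx, rfl⟩ ?_
      rintro b ⟨y, ⟨hyΩ, t, ht0, rfl⟩, rfl⟩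
      have h1t : (0:ℝ) < 1 + t := by linarith
      have hs : t / (1 + t) ∈ Icc (0:ℝ) 1 := ⟨by positivity, by
        rw [div_le_one h1t]; linarith⟩
      have hmem := hv (v (x + t • (x - xs))) (x + t • (x - xs))
        ⟨hyΩ, le_refl _⟩ (t / (1 + t)) hs
      have hxeq2 : (t / (1 + t)) • xs + (1 - t / (1 + t)) • (x + t • (x - xs)) = x := by
        match_scalars <;> (field_simp; try ring)
      rw [hxeq2] at hmem
      exact le_trans hmem.2 (hvg _ hyΩ)
  refine ⟨hstar, ?_⟩
  intro x hx
  have hSne : w x ∈ {r : ℝ | ∃ v : EuclideanSpace ℝ (Fin n) → ℝ,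
      StarShapedFunOn Ω v xs ∧ (∀ y ∈ Ω, v y ≤ g y) ∧ v x = r} := ⟨w, hstar, hwleg, rfl⟩
  have hub : w x ∈ upperBounds {r : ℝ | ∃ v : EuclideanSpace ℝ (Fin n) → ℝ,
      StarShapedFunOn Ω v xs ∧ (∀ y ∈ Ω, v y ≤ g y) ∧ v x = r} := by
    rintro r ⟨v, hv1, hv2, rfl⟩
    exact hC v hv1 hv2 x hx
  exact le_antisymm (le_csSup ⟨w x, hub⟩ hSne) (csSup_le ⟨w x, hSne⟩ hub)
end

section
/- Let Ω ⊆ ℝⁿ be compact and star-shaped with respect to x* ∈ Ω, and let g : Ω → ℝ be continuous. Define u : Ω → ℝ by u(x) = max{ g(x* + t(x − x*)) : t ∈ [0,1] }. Then u is star-shaped with respect to x*, and u equals the upper star-shaped envelope SS⁺(g) of g with respect to x*. -/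
open Set

/-- The upper star-shaped envelope `SS⁺(g)` of `g` with respect to `c` on `Ω`:
the pointwise infimum of all star-shaped (w.r.t. `c`) functions lying above `g` on `Ω`. -/
noncomputable def upperStarShapedEnv {n : ℕ} (Ω : Set (EuclideanSpace ℝ (Fin n)))
    (g : EuclideanSpace ℝ (Fin n) → ℝ) (c : EuclideanSpace ℝ (Fin n))
    (x : EuclideanSpace ℝ (Fin n)) : ℝ :=
  sInf {r : ℝ | ∃ v : EuclideanSpace ℝ (Fin n) → ℝ,
    StarShapedFunOn Ω v c ∧ (∀ y ∈ Ω, g y ≤ v y) ∧ v x = r}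

theorem upperStarShapedEnv_explicit {n : ℕ} (Ω : Set (EuclideanSpace ℝ (Fin n)))
    (hΩc : IsCompact Ω) (xs : EuclideanSpace ℝ (Fin n)) (hxs : xs ∈ Ω)
    (hΩ : StarShapedSet Ω xs)
    (g : EuclideanSpace ℝ (Fin n) → ℝ) (hg : ContinuousOn g Ω)
    (u : EuclideanSpace ℝ (Fin n) → ℝ)
    (hu : ∀ x ∈ Ω,
      u x = sSup ((fun t : ℝ => g (xs + t • (x - xs))) '' Icc (0 : ℝ) 1)) :
    StarShapedFunOn Ω u xs ∧ ∀ x ∈ Ω, u x = upperStarShapedEnv Ω g xs x := by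
  have hpath : ∀ x ∈ Ω, ∀ t ∈ Icc (0:ℝ) 1, xs + t • (x - xs) ∈ Ω := by
    intro x hx t ht
    have h := hΩ x hx (1 - t) ⟨by linarith [ht.2], by linarith [ht.1]⟩
    have he : (1 - t) • xs + (1 - (1 - t)) • x = xs + t • (x - xs) := by module
    rwa [he] at h
  have hbdd : ∀ x ∈ Ω, BddAbove ((fun t : ℝ => g (xs + t • (x - xs))) '' Icc 0 1) := by
    intro x hx
    apply IsCompact.bddAbove
    apply isCompact_Icc.image_of_continuousOn
    apply hg.comp
    · exact Continuous.continuousOn (by continuity)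
    · intro t ht; exact hpath x hx t ht
  have hne : ∀ x : EuclideanSpace ℝ (Fin n),
      ((fun t : ℝ => g (xs + t • (x - xs))) '' Icc 0 1).Nonempty :=
    fun x => ⟨_, mem_image_of_mem _ (left_mem_Icc.mpr zero_le_one)⟩
  have hgu : ∀ y ∈ Ω, g y ≤ u y := by
    intro y hy
    rw [hu y hy]
    have hm : g (xs + (1:ℝ) • (y - xs)) ∈
        (fun t : ℝ => g (xs + t • (y - xs))) '' Icc 0 1 :=
      mem_image_of_mem _ (right_mem_Icc.mpr zero_le_one)
    have he : xs + (1:ℝ) • (y - xs) = y := by module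
    rw [he] at hm
    exact le_csSup (hbdd y hy) hm
  have hstar : StarShapedFunOn Ω u xs := by
    intro α x hx s hs
    obtain ⟨hxΩ, hux⟩ := hx
    have hyΩ : s • xs + (1 - s) • x ∈ Ω := hΩ x hxΩ s hs
    refine ⟨hyΩ, ?_⟩
    rw [hu _ hyΩ]
    refine csSup_le (hne _) ?_
    rintro r ⟨t, ht, rfl⟩
    have he : xs + t • (s • xs + (1 - s) • x - xs) = xs + (t * (1 - s)) • (x - xs) := by
      module
    have hts : t * (1 - s) ∈ Icc (0:ℝ) 1 :=
      ⟨mul_nonneg ht.1 (by linarith [hs.2]), by nlinarith [ht.2, hs.1, ht.1]⟩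
    have hmem : g (xs + (t * (1 - s)) • (x - xs)) ∈
        (fun t : ℝ => g (xs + t • (x - xs))) '' Icc 0 1 :=
      mem_image_of_mem _ hts
    have hle := le_csSup (hbdd x hxΩ) hmem
    rw [← hu x hxΩ] at hle
    simp only [he]
    linarith
  refine ⟨hstar, ?_⟩
  intro x hx
  set S : Set ℝ := {r : ℝ | ∃ v : EuclideanSpace ℝ (Fin n) → ℝ,
    StarShapedFunOn Ω v xs ∧ (∀ y ∈ Ω, g y ≤ v y) ∧ v x = r} with hS
  have hmemS : u x ∈ S := ⟨u, hstar, hgu, rfl⟩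
  have hlb : ∀ r ∈ S, u x ≤ r := by
    rintro r ⟨v, hv, hgv, rfl⟩
    rw [hu x hx]
    refine csSup_le (hne _) ?_
    rintro r ⟨t, ht, rfl⟩
    have hvx : x ∈ {y ∈ Ω | v y ≤ v x} := ⟨hx, le_refl _⟩
    have h := hv (v x) x hvx (1 - t) ⟨by linarith [ht.2], by linarith [ht.1]⟩
    have he : (1 - t) • xs + (1 - (1 - t)) • x = xs + t • (x - xs) := by module
    rw [he] at h
    exact le_trans (hgv _ (hpath x hx t ht)) h.2
  exact le_antisymm (le_csInf ⟨u x, hmemS⟩ hlb) (csInf_le ⟨u x, hlb⟩ hmemS)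
end

section
/- Let u : ℝⁿ → ℝ be differentiable and let x* ∈ ℝⁿ. Then u is star-shaped with respect to x* if and only if ∇u(x) · (x − x*) ≥ 0 for all x ∈ ℝⁿ. -/
open Set Filter

/-- A function `u : ℝⁿ → ℝ` is star-shaped with respect to `c` if all of its
sublevel sets are star-shaped with respect to `c`. -/
def StarShapedFun {n : ℕ} (u : EuclideanSpace ℝ (Fin n) → ℝ)
    (c : EuclideanSpace ℝ (Fin n)) : Prop :=
  ∀ α : ℝ, StarShapedSet {x | u x ≤ α} c

theorem starShapedFun_iff_first_order {n : ℕ}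
    (u : EuclideanSpace ℝ (Fin n) → ℝ) (hu : Differentiable ℝ u)
    (xs : EuclideanSpace ℝ (Fin n)) :
    StarShapedFun u xs ↔ ∀ x, 0 ≤ fderiv ℝ u x (x - xs) := by
  have key : ∀ x : EuclideanSpace ℝ (Fin n), ∀ s : ℝ,
      HasDerivAt (fun t : ℝ => u (x + t • (xs - x)))
        (fderiv ℝ u (x + s • (xs - x)) (xs - x)) s := by
    intro x s
    have h1 : HasDerivAt (fun t : ℝ => x + t • (xs - x)) (xs - x) s := by
      simpa using ((hasDerivAt_id s).smul_const (xs - x)).const_add x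
    exact ((hu _).hasFDerivAt.comp_hasDerivAt s h1)
  constructor
  · intro hss x
    set D := fderiv ℝ u x (xs - x) with hD
    have hderiv : HasDerivAt (fun t : ℝ => u (x + t • (xs - x))) D 0 := by
      simpa only [zero_smul, add_zero] using key x 0
    have hslope : Tendsto (slope (fun t : ℝ => u (x + t • (xs - x))) 0)
        (nhdsWithin 0 (Ioi 0)) (nhds D) :=
      (hasDerivAt_iff_tendsto_slope.mp hderiv).mono_left
        (nhdsWithin_mono _ (fun t ht => ne_of_gt ht))
    have hle : D ≤ 0 := by
      refine le_of_tendsto hslope ?_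
      filter_upwards [Ioo_mem_nhdsGT_of_mem (by norm_num : (0:ℝ) ∈ Ico 0 1)] with t ht
      have hmem := hss (u x) x (by simp) t ⟨le_of_lt ht.1, le_of_lt ht.2⟩
      have heq : t • xs + (1 - t) • x = x + t • (xs - x) := by module
      rw [mem_setOf_eq, heq] at hmem
      have hs : slope (fun t : ℝ => u (x + t • (xs - x))) 0 t
          = (u (x + t • (xs - x)) - u x) / t := by
        simp [slope_def_field]
      rw [hs]
      apply div_nonpos_of_nonpos_of_nonneg (by linarith) (le_of_lt ht.1)
    have hneg : fderiv ℝ u x (x - xs) = -D := by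
      rw [hD, ← map_neg, neg_sub]
    rw [hneg]; linarith
  · intro hgrad α x hx t ht
    have heq : t • xs + (1 - t) • x = x + t • (xs - x) := by module
    rw [mem_setOf_eq]
    rw [heq]
    have hanti : AntitoneOn (fun t : ℝ => u (x + t • (xs - x))) (Icc 0 1) := by
      apply antitoneOn_of_deriv_nonpos (convex_Icc 0 1)
      · exact (hu.continuous.comp (by continuity)).continuousOn
      · intro s _
        exact (key x s).differentiableAt.differentiableWithinAt
      · intro s hs
        rw [interior_Icc] at hs
        rw [(key x s).deriv]
        set y := x + s • (xs - x) with hy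
        have h1 : y - xs = (1 - s) • (x - xs) := by rw [hy]; module
        have h2 := hgrad y
        rw [h1, map_smul] at h2
        have h3 : fderiv ℝ u y (x - xs) = -(fderiv ℝ u y (xs - x)) := by
          rw [← map_neg, neg_sub]
        rw [h3, smul_eq_mul] at h2
        nlinarith [hs.2]
    have h0 : (0:ℝ) ∈ Icc (0:ℝ) 1 := by norm_num
    have := hanti h0 ht ht.1
    simp only [zero_smul, add_zero] at this
    exact le_trans this hx
end

section
/- Let Ω ⊆ ℝⁿ be a bounded open set that is star-shaped with respect to x* ∈ Ω, let g : Ω → ℝ be continuous and bounded below, and let w = SS⁻(g) be the lower star-shaped envelope of g with respect to x*. Assume w is continuous. Then w is a viscosity solution of the obstacle problem max{ w(x) − g(x), (x* − x) · ∇w(x) } = 0 on Ω; that is, (i) for every continuously differentiable φ : Ω → ℝ and every local maximum point x ∈ Ω of w − φ, max{ w(x) − g(x), (x* − x) · ∇φ(x) } ≤ 0, and (ii) for every continuously differentiable φ : Ω → ℝ and every local minimum point x ∈ Ω of w − φ, max{ w(x) − g(x), (x* − x) · ∇φ(x) } ≥ 0. -/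
open Set

private lemma maxmono (s c t : ℝ) (hc : 0 ≤ c) (ht0 : 0 ≤ t) (ht1 : t ≤ 1) :
    max 0 ((1-t)*s - c) ≤ max 0 (s - c) := by
  rcases le_total s 0 with h|h
  · apply max_le (le_max_left _ _)
    refine le_trans ?_ (le_max_left _ _)
    nlinarith
  · exact max_le (le_max_left _ _) (le_trans (by nlinarith) (le_max_right _ _))

private lemma starShapedFunOn_of_mono {n : ℕ} {Ω : Set (EuclideanSpace ℝ (Fin n))}
    {xs : EuclideanSpace ℝ (Fin n)} (hΩ : StarShapedSet Ω xs)
    (u : EuclideanSpace ℝ (Fin n) → ℝ)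
    (h : ∀ x ∈ Ω, ∀ t ∈ Icc (0:ℝ) 1, u (t • xs + (1-t) • x) ≤ u x) :
    StarShapedFunOn Ω u xs := by
  intro α x hx t ht
  exact ⟨hΩ x hx.1 t ht, le_trans (h x hx.1 t ht) hx.2⟩

private lemma env_bddAbove {n : ℕ} {Ω : Set (EuclideanSpace ℝ (Fin n))}
    {xs : EuclideanSpace ℝ (Fin n)} {g : EuclideanSpace ℝ (Fin n) → ℝ}
    {x : EuclideanSpace ℝ (Fin n)} (hx : x ∈ Ω) :
    BddAbove {r : ℝ | ∃ v : EuclideanSpace ℝ (Fin n) → ℝ,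
      StarShapedFunOn Ω v xs ∧ (∀ y ∈ Ω, v y ≤ g y) ∧ v x = r} := by
  refine ⟨g x, ?_⟩
  rintro r ⟨v, _, hv2, rfl⟩
  exact hv2 x hx

private lemma le_env {n : ℕ} {Ω : Set (EuclideanSpace ℝ (Fin n))}
    {xs : EuclideanSpace ℝ (Fin n)} {g : EuclideanSpace ℝ (Fin n) → ℝ}
    {x : EuclideanSpace ℝ (Fin n)} (hx : x ∈ Ω)
    (v : EuclideanSpace ℝ (Fin n) → ℝ) (hv1 : StarShapedFunOn Ω v xs)
    (hv2 : ∀ y ∈ Ω, v y ≤ g y) :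
    v x ≤ lowerStarShapedEnv Ω g xs x :=
  le_csSup (env_bddAbove hx) ⟨v, hv1, hv2, rfl⟩

private lemma const_starShaped {n : ℕ} {Ω : Set (EuclideanSpace ℝ (Fin n))}
    {xs : EuclideanSpace ℝ (Fin n)} (hΩ : StarShapedSet Ω xs) (m : ℝ) :
    StarShapedFunOn Ω (fun _ => m) xs :=
  starShapedFunOn_of_mono hΩ _ (fun _ _ _ _ => le_rfl)

private lemma env_le_g {n : ℕ} {Ω : Set (EuclideanSpace ℝ (Fin n))}
    {xs : EuclideanSpace ℝ (Fin n)} {g : EuclideanSpace ℝ (Fin n) → ℝ}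
    (hΩ : StarShapedSet Ω xs) (m₀ : ℝ) (hm₀ : ∀ y ∈ Ω, m₀ ≤ g y)
    {x : EuclideanSpace ℝ (Fin n)} (hx : x ∈ Ω) :
    lowerStarShapedEnv Ω g xs x ≤ g x := by
  apply csSup_le
  · exact ⟨m₀, (fun _ => m₀), const_starShaped hΩ m₀, hm₀, rfl⟩
  · rintro r ⟨v, _, hv2, rfl⟩
    exact hv2 x hx

private lemma env_star {n : ℕ} {Ω : Set (EuclideanSpace ℝ (Fin n))}
    {xs : EuclideanSpace ℝ (Fin n)} {g : EuclideanSpace ℝ (Fin n) → ℝ}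
    (hΩ : StarShapedSet Ω xs) (m₀ : ℝ) (hm₀ : ∀ y ∈ Ω, m₀ ≤ g y)
    {x : EuclideanSpace ℝ (Fin n)} (hx : x ∈ Ω) {t : ℝ} (ht : t ∈ Icc (0:ℝ) 1) :
    lowerStarShapedEnv Ω g xs (t • xs + (1-t) • x) ≤ lowerStarShapedEnv Ω g xs x := by
  apply csSup_le
  · exact ⟨m₀, (fun _ => m₀), const_starShaped hΩ m₀, hm₀, rfl⟩
  · rintro r ⟨v, hv1, hv2, rfl⟩
    have hvx : v (t • xs + (1-t) • x) ≤ v x := (hv1 (v x) x ⟨hx, le_rfl⟩ t ht).2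
    exact le_trans hvx (le_env hx v hv1 hv2)

private lemma aux_sub {n : ℕ} (Ω : Set (EuclideanSpace ℝ (Fin n))) (hΩo : IsOpen Ω)
    (xs : EuclideanSpace ℝ (Fin n)) (w φ : EuclideanSpace ℝ (Fin n) → ℝ) (hφ : ContDiff ℝ 1 φ) (x : EuclideanSpace ℝ (Fin n)) (hx : x ∈ Ω)
    (hmax : IsLocalMaxOn (fun y => w y - φ y) Ω x)
    (hstar : ∀ y ∈ Ω, ∀ t ∈ Icc (0:ℝ) 1, w (t • xs + (1-t) • y) ≤ w y) :
    fderiv ℝ φ x (xs - x) ≤ 0 := by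
  set L := fderiv ℝ φ x with hL
  have hd : HasFDerivAt φ L x := (hφ.differentiable one_ne_zero x).hasFDerivAt
  set v := x - xs with hv
  set c : ℝ → EuclideanSpace ℝ (Fin n) := fun t => x + t • v with hc
  have hinner : HasDerivAt (fun t : ℝ => t • v) v 0 := by
    simpa using (hasDerivAt_id (0:ℝ)).smul_const v
  have hcd : HasDerivAt c v 0 := hinner.const_add x
  have hc0 : c 0 = x := by simp [hc]
  have hf : HasDerivAt (fun t => φ (c t)) (L v) 0 := by
    have hd' : HasFDerivAt φ L (c 0) := hc0 ▸ hd
    exact hd'.comp_hasDerivAt 0 hcd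
  have hct : Continuous c := by continuity
  have hctend : Filter.Tendsto c (nhds 0) (nhds x) := by
    rw [← hc0]; exact hct.tendsto 0
  have h1 : ∀ᶠ t in nhdsWithin 0 (Ioi 0), c t ∈ Ω :=
    (hctend.eventually (hΩo.eventually_mem hx)).filter_mono nhdsWithin_le_nhds
  have hctend' : Filter.Tendsto c (nhdsWithin 0 (Ioi 0)) (nhdsWithin x Ω) := by
    rw [tendsto_nhdsWithin_iff]
    exact ⟨hctend.mono_left nhdsWithin_le_nhds, h1⟩
  have h2 : ∀ᶠ t in nhdsWithin 0 (Ioi 0), w (c t) - φ (c t) ≤ w x - φ x :=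
    hctend'.eventually hmax
  have h3 : ∀ᶠ t in nhdsWithin 0 (Ioi 0), 0 ≤ slope (fun t => φ (c t)) 0 t := by
    filter_upwards [h1, h2, self_mem_nhdsWithin] with t hmem hle (htpos : t ∈ Ioi 0)
    have htpos' : (0:ℝ) < t := htpos
    have hxw : w x ≤ w (c t) := by
      have hs1 : t/(1+t) ∈ Icc (0:ℝ) 1 := by
        constructor
        · positivity
        · rw [div_le_one (by linarith)]; linarith
      have heq : (t/(1+t)) • xs + (1 - t/(1+t)) • (c t) = x := by
        have h1t : (1:ℝ) + t ≠ 0 := by linarith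
        simp only [hc, hv]
        match_scalars <;> field_simp <;> ring
      have := hstar (c t) hmem (t/(1+t)) hs1
      rwa [heq] at this
    have h0 : 0 ≤ φ (c t) - φ (c 0) := by rw [hc0]; linarith
    rw [slope_def_field]
    apply div_nonneg h0 (by linarith)
  have htendslope : Filter.Tendsto (slope (fun t => φ (c t)) 0) (nhdsWithin 0 (Ioi 0)) (nhds (L v)) := by
    have := hasDerivAt_iff_tendsto_slope.mp hf
    exact this.mono_left (nhdsWithin_mono _ (fun t ht => by simp; exact ne_of_gt ht))
  have hLv : 0 ≤ L v := ge_of_tendsto htendslope h3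
  have : xs - x = -v := by simp [hv]
  rw [this, map_neg]
  linarith


set_option maxHeartbeats 1000000 in
private lemma aux_super {n : ℕ} (Ω : Set (EuclideanSpace ℝ (Fin n))) (hΩo : IsOpen Ω)
    (hΩb : Bornology.IsBounded Ω)
    (xs : EuclideanSpace ℝ (Fin n)) (hxs : xs ∈ Ω)
    (hΩ : ∀ x ∈ Ω, ∀ t ∈ Icc (0:ℝ) 1, t • xs + (1-t) • x ∈ Ω)
    (g w φ : EuclideanSpace ℝ (Fin n) → ℝ)
    (hg : ContinuousOn g Ω)
    (m₀ : ℝ) (hm₀ : ∀ y ∈ Ω, m₀ ≤ g y)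
    (hwm : ∀ y ∈ Ω, m₀ ≤ w y) (hwg : ∀ y ∈ Ω, w y ≤ g y)
    (hstar : ∀ y ∈ Ω, ∀ t ∈ Icc (0:ℝ) 1, w (t • xs + (1-t) • y) ≤ w y)
    (hadm : ∀ v : EuclideanSpace ℝ (Fin n) → ℝ,
      (∀ x ∈ Ω, ∀ t ∈ Icc (0:ℝ) 1, v (t • xs + (1-t) • x) ≤ v x) →
      (∀ y ∈ Ω, v y ≤ g y) → ∀ x ∈ Ω, v x ≤ w x)
    (L : EuclideanSpace ℝ (Fin n) →L[ℝ] ℝ)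
    (x₀ : EuclideanSpace ℝ (Fin n)) (hx₀ : x₀ ∈ Ω)
    (hd : HasFDerivAt φ L x₀)
    (hmin : IsLocalMinOn (fun y => w y - φ y) Ω x₀)
    (hwg0 : w x₀ < g x₀) (hder : L (xs - x₀) < 0) : False := by
  -- basic quantities
  have hx₀xs : x₀ ≠ xs := by
    rintro rfl; rw [sub_self, map_zero] at hder; exact lt_irrefl 0 hder
  set e : EuclideanSpace ℝ (Fin n) := x₀ - xs with he
  set ρ₀ : ℝ := ‖e‖ with hρ₀def
  have hρ₀ : 0 < ρ₀ := by
    rw [hρ₀def, norm_pos_iff]; exact sub_ne_zero.mpr hx₀xs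
  set θ : ℝ := L e with hθdef
  have hθ : 0 < θ := by
    have : xs - x₀ = -e := by rw [he]; abel
    rw [this, map_neg] at hder; linarith
  set ε₁ : ℝ := θ/(4*ρ₀) with hε₁def
  have hε₁ : 0 < ε₁ := by positivity
  set δ₁ : ℝ := (g x₀ - w x₀)/2 with hδ₁def
  have hδ₁ : 0 < δ₁ := by rw [hδ₁def]; linarith
  -- bound D
  obtain ⟨D₀, hD₀⟩ := hΩb.subset_closedBall xs
  set D : ℝ := max D₀ ρ₀ with hDdef
  have hρ₀D : ρ₀ ≤ D := le_max_right _ _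
  have hD : 0 < D := lt_of_lt_of_le hρ₀ hρ₀D
  have hDbound : ∀ y ∈ Ω, ‖y - xs‖ ≤ D := by
    intro y hy
    have := hD₀ hy
    rw [Metric.mem_closedBall, dist_eq_norm] at this
    exact le_trans this (le_max_left _ _)
  -- the good ball of radius r
  have ev1 : ∀ᶠ y in nhds x₀, y ∈ Ω := hΩo.eventually_mem hx₀
  have ev2 : ∀ᶠ y in nhds x₀, w x₀ - φ x₀ ≤ w y - φ y := by
    have := hmin
    unfold IsLocalMinOn IsMinFilter at this
    rwa [hΩo.nhdsWithin_eq hx₀] at this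
  have ev3 : ∀ᶠ y in nhds x₀, |φ y - φ x₀ - L (y - x₀)| ≤ ε₁ * ‖y - x₀‖ := by
    have h := hd.isLittleO.def hε₁
    filter_upwards [h] with y hy
    simpa [Real.norm_eq_abs] using hy
  have ev4 : ∀ᶠ y in nhds x₀, w x₀ + δ₁ < g y := by
    have hgc : ContinuousAt g x₀ := hg.continuousAt (hΩo.mem_nhds hx₀)
    have hlt : w x₀ + δ₁ < g x₀ := by rw [hδ₁def]; linarith
    exact hgc.eventually_const_lt hlt
  obtain ⟨r, hr, hball⟩ := Metric.eventually_nhds_iff.mp ((ev1.and ev2).and (ev3.and ev4))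
  -- parameters
  set a : ℝ := r/4 with hadef
  have ha : 0 < a := by positivity
  set η : ℝ := min ρ₀ (r/4) with hηdef
  have hη : 0 < η := lt_min hρ₀ (by positivity)
  have hηρ : η ≤ ρ₀ := min_le_left _ _
  have hηr : η ≤ r/4 := min_le_right _ _
  set δ₂ : ℝ := a*θ/(4*ρ₀) with hδ₂def
  have hδ₂ : 0 < δ₂ := by positivity
  set δ : ℝ := min δ₁ δ₂ with hδdef
  have hδ : 0 < δ := lt_min hδ₁ hδ₂
  have hδle₁ : δ ≤ δ₁ := min_le_left _ _
  have hδle₂ : δ ≤ δ₂ := min_le_right _ _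
  set EE : ℝ := min (r/4) ((a*θ/(2*ρ₀))/(‖L‖+ε₁)) with hEEdef
  have hEE : 0 < EE := lt_min (by positivity) (by positivity)
  have hEEr : EE ≤ r/4 := min_le_left _ _
  have hEEL : EE ≤ (a*θ/(2*ρ₀))/(‖L‖+ε₁) := min_le_right _ _
  set κ : ℝ := max 1 (2*D/EE) with hκdef
  have hκ1 : (1:ℝ) ≤ κ := le_max_left _ _
  have hκ : 0 < κ := lt_of_lt_of_le one_pos hκ1
  have hκE : 2*D/κ ≤ EE := by
    rw [div_le_iff₀ hκ]
    calc 2*D = EE * (2*D/EE) := by field_simp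
    _ ≤ EE * κ := by
        apply mul_le_mul_of_nonneg_left (le_max_right _ _) (le_of_lt hEE)
  set c : ℝ := ρ₀ - η with hcdef
  have hc : 0 ≤ c := by rw [hcdef]; linarith
  set m : ℝ := m₀ - 1 with hmdef
  have hwm' : m₀ ≤ w x₀ := hwm x₀ hx₀
  set lam : ℝ := (w x₀ + δ - m)/η with hlamdef
  have hlam : 0 ≤ lam := by
    apply div_nonneg _ (le_of_lt hη)
    rw [hmdef]; linarith
  clear_value lam m c κ EE δ δ₂ η a D δ₁ ε₁ θ ρ₀ e
  -- the cone gauge and test function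
  set F : EuclideanSpace ℝ (Fin n) → ℝ :=
    fun z => ‖z‖ - (κ/ρ₀) * ‖ρ₀ • z - ‖z‖ • e‖ with hFdef
  have hFapp : ∀ z : EuclideanSpace ℝ (Fin n),
      F z = ‖z‖ - (κ/ρ₀) * ‖ρ₀ • z - ‖z‖ • e‖ := fun z => rfl
  set ψ : EuclideanSpace ℝ (Fin n) → ℝ :=
    fun y => min (w x₀ + δ) (m + lam * max 0 (F (y - xs) - c)) with hψdef
  have hψapp : ∀ y : EuclideanSpace ℝ (Fin n),
      ψ y = min (w x₀ + δ) (m + lam * max 0 (F (y - xs) - c)) := fun y => rfl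
  clear_value ψ F
  have hFscale : ∀ (z : EuclideanSpace ℝ (Fin n)) (t : ℝ), 0 ≤ t → t ≤ 1 →
      F ((1-t) • z) = (1-t) * F z := by
    intro z t ht0 ht1
    have h1t : (0:ℝ) ≤ 1 - t := by linarith
    have hn : ‖(1-t) • z‖ = (1-t) * ‖z‖ := by
      rw [norm_smul, Real.norm_eq_abs, abs_of_nonneg h1t]
    rw [hFapp, hFapp, hn]
    have harg : ρ₀ • ((1-t) • z) - ((1-t) * ‖z‖) • e = (1-t) • (ρ₀ • z - ‖z‖ • e) := by
      rw [smul_comm, mul_smul, smul_sub]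
    rw [harg, norm_smul, Real.norm_eq_abs, abs_of_nonneg h1t]
    ring
  -- ψ is monotone along rays
  have hψmono : ∀ (x : EuclideanSpace ℝ (Fin n)), ∀ t ∈ Icc (0:ℝ) 1,
      ψ (t • xs + (1-t) • x) ≤ ψ x := by
    intro x t ht
    have hzz : (t • xs + (1-t) • x) - xs = (1-t) • (x - xs) := by module
    rw [hψapp, hψapp, hzz, hFscale (x - xs) t ht.1 ht.2]
    apply min_le_min le_rfl
    apply add_le_add le_rfl
    apply mul_le_mul_of_nonneg_left _ hlam
    exact maxmono (F (x - xs)) c t hc ht.1 ht.2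
  -- ψ at x₀
  have hFe : F e = ρ₀ := by
    rw [hFapp, ← hρ₀def, sub_self (ρ₀ • e), norm_zero, mul_zero, sub_zero]
  have hψx₀ : ψ x₀ = w x₀ + δ := by
    rw [hψapp]
    have hx₀e : x₀ - xs = e := he.symm
    rw [hx₀e, hFe]
    have h1 : ρ₀ - c = η := by rw [hcdef]; ring
    rw [h1, max_eq_right (le_of_lt hη), hlamdef, div_mul_cancel₀ _ (ne_of_gt hη)]
    rw [min_eq_left]
    linarith
  -- ψ ≤ g on Ω
  have hψg : ∀ y ∈ Ω, ψ y ≤ g y := by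
    intro y hy
    set z : EuclideanSpace ℝ (Fin n) := y - xs with hzdef
    clear_value z
    rcases le_or_gt (F z) c with hFle | hFgt
    · -- outside cone: ψ = m
      have h1 : ψ y ≤ m := by
        rw [hψapp]
        refine le_trans (min_le_right _ _) ?_
        rw [← hzdef, max_eq_left (by linarith), mul_zero, add_zero]
      exact le_trans h1 (by rw [hmdef]; linarith [hm₀ y hy] : m ≤ g y)
    · have hzD : ‖z‖ ≤ D := by rw [hzdef]; exact hDbound y hy
      have hFz_le : F z ≤ ‖z‖ := by
        rw [hFapp]
        have : 0 ≤ (κ/ρ₀) * ‖ρ₀ • z - ‖z‖ • e‖ := by positivity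
        linarith
      have hzc : c < ‖z‖ := lt_of_lt_of_le hFgt hFz_le
      have hN : ‖ρ₀ • z - ‖z‖ • e‖ ≤ (ρ₀/κ) * (‖z‖ - c) := by
        have h1 : (κ/ρ₀) * ‖ρ₀ • z - ‖z‖ • e‖ ≤ ‖z‖ - c := by
          have hfz := hFapp z
          linarith [hFgt]
        have hκρ : 0 < κ/ρ₀ := by positivity
        rw [← le_div_iff₀' hκρ] at h1
        calc ‖ρ₀ • z - ‖z‖ • e‖ ≤ (‖z‖ - c)/(κ/ρ₀) := h1
        _ = (ρ₀/κ) * (‖z‖ - c) := by field_simp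
      rcases lt_or_ge (dist y x₀) r with hyr | hyr
      · -- inside the good ball
        obtain ⟨⟨_, _⟩, _, hgy⟩ := hball hyr
        have : ψ y ≤ w x₀ + δ := by rw [hψapp]; exact min_le_left _ _
        linarith [hδle₁]
      · -- far from x₀: show w y ≥ w x₀ + δ
        have hyx₀ : r ≤ ‖y - x₀‖ := by rwa [← dist_eq_norm]
        -- first: ‖z‖ ≥ ρ₀ + a
        have hz_big : ρ₀ + a ≤ ‖z‖ := by
          by_contra hcon
          push_neg at hcon
          have hza : ‖z‖ - c < a + η := by rw [hcdef]; linarith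
          have h1 : ‖ρ₀ • z - ‖z‖ • e‖ ≤ (ρ₀/κ) * (a + η) := by
            refine le_trans hN ?_
            apply mul_le_mul_of_nonneg_left (le_of_lt hza) (by positivity)
          -- ρ₀ • (z - e) = (ρ₀ • z - ‖z‖ • e) + (‖z‖ - ρ₀) • e
          have hsplit : ρ₀ • (z - e) = (ρ₀ • z - ‖z‖ • e) + (‖z‖ - ρ₀) • e := by
            module
          have h2 : ρ₀ * ‖z - e‖ ≤ ‖ρ₀ • z - ‖z‖ • e‖ + |‖z‖ - ρ₀| * ρ₀ := by
            have := norm_add_le (ρ₀ • z - ‖z‖ • e) ((‖z‖ - ρ₀) • e)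
            rw [← hsplit] at this
            rw [norm_smul, Real.norm_eq_abs, abs_of_pos hρ₀] at this
            rw [norm_smul, Real.norm_eq_abs, ← hρ₀def] at this
            linarith
          have habs : |‖z‖ - ρ₀| ≤ max a η := by
            rw [abs_le]
            refine ⟨?_, ?_⟩
            · have h5 : -η ≤ ‖z‖ - ρ₀ := by rw [hcdef] at hzc; linarith
              linarith [le_max_right a η]
            · linarith [le_max_left a η]
          have hmaxr : max a η ≤ r/4 := max_le (le_of_eq hadef) hηr
          have haη : a + η ≤ r/2 := by
            have : a ≤ r/4 := le_of_eq hadef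
            linarith
          have h3 : ‖z - e‖ ≤ (a+η)/κ + max a η := by
            have hρκ : (ρ₀/κ) * (a + η) = ρ₀ * ((a+η)/κ) := by field_simp
            rw [hρκ] at h1
            have h6 : |‖z‖ - ρ₀| * ρ₀ ≤ (max a η) * ρ₀ :=
              mul_le_mul_of_nonneg_right habs (le_of_lt hρ₀)
            have h7 : ρ₀ * ‖z - e‖ ≤ ρ₀ * ((a+η)/κ + max a η) := by
              have : ρ₀ * ((a+η)/κ + max a η) = ρ₀ * ((a+η)/κ) + (max a η) * ρ₀ := by ring
              rw [this]
              linarith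
            exact le_of_mul_le_mul_left h7 hρ₀
          have h4 : (a+η)/κ ≤ a+η := div_le_self (by linarith) hκ1
          have hze : z - e = y - x₀ := by rw [hzdef, he]; abel
          rw [hze] at h3
          have : ‖y - x₀‖ < r := by
            have := le_trans h3 (by linarith : (a+η)/κ + max a η ≤ r/2 + r/4)
            linarith
          linarith
        -- projection point
        have hznz : (0:ℝ) < ‖z‖ := lt_of_le_of_lt hc hzc
        set τ : ℝ := (ρ₀ + a)/‖z‖ with hτdef
        have hτpos : 0 < τ := by positivity
        have hτle : τ ≤ 1 := by
          rw [hτdef, div_le_one hznz]; exact hz_big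
        clear_value τ
        set t' : ℝ := 1 - τ with ht'def
        have ht'mem : t' ∈ Icc (0:ℝ) 1 := ⟨by linarith, by linarith⟩
        have ht'τ : 1 - t' = τ := by rw [ht'def]; ring
        clear_value t'
        set zpt : EuclideanSpace ℝ (Fin n) := t' • xs + (1-t') • y with hzptdef
        clear_value zpt
        have hzptΩ : zpt ∈ Ω := by rw [hzptdef]; exact hΩ y hy t' ht'mem
        have hwzpt : w zpt ≤ w y := by rw [hzptdef]; exact hstar y hy t' ht'mem
        have hzpt_xs : zpt - xs = τ • z := by
          rw [hzptdef, ht'def, hzdef]; module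
        have hτz : τ * ‖z‖ = ρ₀ + a := by
          rw [hτdef, div_mul_cancel₀ _ (ne_of_gt hznz)]
        -- error vector
        set err : EuclideanSpace ℝ (Fin n) := zpt - x₀ - (a/ρ₀) • e with herrdef
        clear_value err
        have herr_eq : ρ₀ • err = τ • (ρ₀ • z - ‖z‖ • e) := by
          have h1 : zpt - x₀ = τ • z - e := by
            have h1a : zpt - x₀ = (zpt - xs) - e := by rw [he]; abel
            rw [h1a, hzpt_xs]
          have key : τ • (ρ₀ • z - ‖z‖ • e) = ρ₀ • (τ • z) - (ρ₀ + a) • e := by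
            rw [← hτz]; module
          rw [herrdef, h1, key]
          have h2 : ρ₀ • ((a/ρ₀) • e) = a • e := by
            rw [smul_smul]; congr 1; field_simp
          rw [smul_sub, smul_sub, h2]
          module
        have herr_norm : ‖err‖ ≤ EE := by
          have h1 : ρ₀ * ‖err‖ = τ * ‖ρ₀ • z - ‖z‖ • e‖ := by
            have := congrArg norm herr_eq
            rwa [norm_smul, norm_smul, Real.norm_eq_abs, Real.norm_eq_abs,
              abs_of_pos hρ₀, abs_of_pos hτpos] at this
          have h2 : τ * ‖ρ₀ • z - ‖z‖ • e‖ ≤ (ρ₀/κ) * (‖z‖ - c) := by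
            calc τ * ‖ρ₀ • z - ‖z‖ • e‖ ≤ 1 * ‖ρ₀ • z - ‖z‖ • e‖ := by
                  apply mul_le_mul_of_nonneg_right hτle (norm_nonneg _)
            _ = ‖ρ₀ • z - ‖z‖ • e‖ := one_mul _
            _ ≤ (ρ₀/κ) * (‖z‖ - c) := hN
          have h3 : (ρ₀/κ) * (‖z‖ - c) ≤ (ρ₀/κ) * (2*D) := by
            apply mul_le_mul_of_nonneg_left _ (by positivity)
            rw [hcdef]; linarith [hρ₀D]
          have h4 : ρ₀ * ‖err‖ ≤ ρ₀ * (2*D/κ) := by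
            rw [h1]
            refine le_trans h2 (le_trans h3 (le_of_eq ?_))
            field_simp
          have := le_of_mul_le_mul_left h4 hρ₀
          linarith [hκE]
        -- zpt is in the good ball
        have hzpt_x₀ : zpt - x₀ = (a/ρ₀) • e + err := by rw [herrdef]; abel
        have hzpt_norm : ‖zpt - x₀‖ ≤ a + EE := by
          rw [hzpt_x₀]
          refine le_trans (norm_add_le _ _) ?_
          rw [norm_smul, Real.norm_eq_abs, abs_of_pos (by positivity : (0:ℝ) < a/ρ₀), ← hρ₀def]
          have : a/ρ₀ * ρ₀ = a := by field_simp
          rw [this]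
          linarith [herr_norm]
        have hzpt_ball : dist zpt x₀ < r := by
          rw [dist_eq_norm]
          have : a + EE ≤ r/4 + r/4 := by
            have : a ≤ r/4 := le_of_eq hadef
            linarith
          linarith [hzpt_norm]
        obtain ⟨⟨hzptΩ', hminineq⟩, hdiffineq, _⟩ := hball hzpt_ball
        -- quantitative gain
        have hLerr : -(‖L‖ * ‖err‖) ≤ L err := by
          have := L.le_opNorm err
          have habs : |L err| ≤ ‖L‖ * ‖err‖ := by
            rwa [← Real.norm_eq_abs]
          linarith [neg_abs_le (L err)]
        have hLa : L ((a/ρ₀) • e) = (a/ρ₀) * θ := by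
          rw [map_smul, hθdef]; simp
        have hφineq : φ zpt - φ x₀ ≥ L (zpt - x₀) - ε₁ * ‖zpt - x₀‖ := by
          have := hdiffineq
          have h := abs_le.mp this
          linarith [h.1]
        have hLzpt : L (zpt - x₀) = (a/ρ₀) * θ + L err := by
          rw [hzpt_x₀, map_add, hLa]
        have hLEE : (‖L‖ + ε₁) * EE ≤ a*θ/(2*ρ₀) := by
          have h2 : 0 < ‖L‖ + ε₁ := by positivity
          rw [← le_div_iff₀' h2]
          exact hEEL
        have hgain : w zpt ≥ w x₀ + δ₂ := by
          have h1 : w zpt - φ zpt ≥ w x₀ - φ x₀ := hminineq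
          have h2 : ε₁ * ‖zpt - x₀‖ ≤ ε₁ * (a + EE) := by
            apply mul_le_mul_of_nonneg_left hzpt_norm (le_of_lt hε₁)
          have h3 : ‖L‖ * ‖err‖ ≤ ‖L‖ * EE := by
            apply mul_le_mul_of_nonneg_left herr_norm (norm_nonneg _)
          have hε₁a : ε₁ * a = a*θ/(4*ρ₀) := by
            rw [hε₁def]; field_simp
          have key : (a/ρ₀) * θ + L err - ε₁ * (a + EE) ≥ δ₂ := by
            have hLerr' : L err ≥ -(‖L‖ * EE) := by linarith
            have hexp : (a/ρ₀) * θ = a*θ/ρ₀ := by ring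
            have : ε₁ * (a + EE) = ε₁ * a + ε₁ * EE := by ring
            rw [this, hε₁a]
            have hsum : ‖L‖ * EE + ε₁ * EE ≤ a*θ/(2*ρ₀) := by
              have : (‖L‖ + ε₁) * EE = ‖L‖ * EE + ε₁ * EE := by ring
              linarith [hLEE, this.symm.le, this.le]
            rw [hδ₂def] at *
            have harith : a*θ/ρ₀ - a*θ/(4*ρ₀) - a*θ/(2*ρ₀) = a*θ/(4*ρ₀) := by
              field_simp; ring
            rw [hexp]
            linarith
          linarith [hφineq, hLzpt]
        have hwy : w x₀ + δ ≤ w y := by linarith [hδle₂]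
        have hψle : ψ y ≤ w x₀ + δ := by rw [hψapp]; exact min_le_left _ _
        have hwgy : w y ≤ g y := hwg y hy
        linarith
  -- contradiction
  have hψadm : ∀ x ∈ Ω, ∀ t ∈ Icc (0:ℝ) 1, ψ (t • xs + (1-t) • x) ≤ ψ x :=
    fun x _ t ht => hψmono x t ht
  have := hadm ψ hψadm hψg x₀ hx₀
  rw [hψx₀] at this
  linarith

theorem lowerEnv_viscosity_solution {n : ℕ}
    (Ω : Set (EuclideanSpace ℝ (Fin n))) (hΩo : IsOpen Ω)
    (hΩb : Bornology.IsBounded Ω)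
    (xs : EuclideanSpace ℝ (Fin n)) (hxs : xs ∈ Ω) (hΩ : StarShapedSet Ω xs)
    (g : EuclideanSpace ℝ (Fin n) → ℝ) (hg : ContinuousOn g Ω)
    (hgb : BddBelow (g '' Ω))
    (w : EuclideanSpace ℝ (Fin n) → ℝ) (hw : w = lowerStarShapedEnv Ω g xs)
    (hwc : ContinuousOn w Ω) :
    (∀ φ : EuclideanSpace ℝ (Fin n) → ℝ, ContDiff ℝ 1 φ →
      ∀ x ∈ Ω, IsLocalMaxOn (fun y => w y - φ y) Ω x →
        max (w x - g x) (fderiv ℝ φ x (xs - x)) ≤ 0) ∧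
    (∀ φ : EuclideanSpace ℝ (Fin n) → ℝ, ContDiff ℝ 1 φ →
      ∀ x ∈ Ω, IsLocalMinOn (fun y => w y - φ y) Ω x →
        0 ≤ max (w x - g x) (fderiv ℝ φ x (xs - x))) := by
  obtain ⟨m₀, hm₀'⟩ := hgb
  have hm₀ : ∀ y ∈ Ω, m₀ ≤ g y := fun y hy => hm₀' ⟨y, hy, rfl⟩
  have hwg : ∀ y ∈ Ω, w y ≤ g y := fun y hy => by
    rw [hw]; exact env_le_g hΩ m₀ hm₀ hy
  have hwm : ∀ y ∈ Ω, m₀ ≤ w y := fun y hy => by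
    rw [hw]; exact le_env hy (fun _ => m₀) (const_starShaped hΩ m₀) hm₀
  have hstarw : ∀ y ∈ Ω, ∀ t ∈ Icc (0:ℝ) 1, w (t • xs + (1-t) • y) ≤ w y := by
    intro y hy t ht
    rw [hw]; exact env_star hΩ m₀ hm₀ hy ht
  have hadm : ∀ v : EuclideanSpace ℝ (Fin n) → ℝ,
      (∀ x ∈ Ω, ∀ t ∈ Icc (0:ℝ) 1, v (t • xs + (1-t) • x) ≤ v x) →
      (∀ y ∈ Ω, v y ≤ g y) → ∀ x ∈ Ω, v x ≤ w x := by
    intro v hmono hle x hx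
    rw [hw]; exact le_env hx v (starShapedFunOn_of_mono hΩ v hmono) hle
  constructor
  · intro φ hφ x hx hmax
    refine max_le ?_ ?_
    · have := hwg x hx; linarith
    · exact aux_sub Ω hΩo xs w φ hφ x hx hmax hstarw
  · intro φ hφ x hx hmin
    by_contra hcon
    rw [not_le, max_lt_iff] at hcon
    exact aux_super Ω hΩo hΩb xs hxs hΩ g w φ hg m₀ hm₀ hwm hwg hstarw hadm
      (fderiv ℝ φ x) x hx ((hφ.differentiable one_ne_zero x).hasFDerivAt) hmin
      (by linarith [hcon.1]) hcon.2
end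

section
/- Let Ω ⊆ ℝⁿ be a bounded open set that is star-shaped with respect to x* ∈ Ω, let g : Ω → ℝ be continuous, and let u = SS⁺(g) be the upper star-shaped envelope of g with respect to x*. Then u(x*) = g(x*) and u is a viscosity solution of the obstacle problem min{ u(x) − g(x), (x − x*) · ∇u(x) } = 0 on Ω; that is, (i) for every continuously differentiable φ : Ω → ℝ and every local maximum point x ∈ Ω of u − φ, min{ u(x) − g(x), (x − x*) · ∇φ(x) } ≤ 0, and (ii) for every continuously differentiable φ : Ω → ℝ and every local minimum point x ∈ Ω of u − φ, min{ u(x) − g(x), (x − x*) · ∇φ(x) } ≥ 0. -/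
open Set

private lemma isCompact_seg {E : Type*} [NormedAddCommGroup E] [NormedSpace ℝ E] (x y : E) :
    IsCompact (segment ℝ x y) := by
  rw [segment_eq_image]
  exact isCompact_Icc.image (by continuity)

private lemma slope_pos_lemma (ψ : ℝ → ℝ) (d : ℝ) (hd : HasDerivAt ψ d 0)
    (hev : ∀ᶠ t in nhdsWithin 0 (Ioi 0), ψ 0 ≤ ψ t) : 0 ≤ d := by
  have h1 : HasDerivWithinAt ψ d (Ioi 0) 0 := hd.hasDerivWithinAt
  rw [hasDerivWithinAt_iff_tendsto_slope] at h1
  have h2 : Ioi (0:ℝ) \ {0} = Ioi 0 := diff_singleton_eq_self (by simp)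
  rw [h2] at h1
  refine ge_of_tendsto h1 ?_
  filter_upwards [hev, self_mem_nhdsWithin] with t h1t h2t
  have ht : (0:ℝ) < t := h2t
  rw [slope_def_field]
  apply div_nonneg (by linarith) (by linarith)

private lemma slope_neg_lemma (ψ : ℝ → ℝ) (d : ℝ) (hd : HasDerivAt ψ d 0)
    (hev : ∀ᶠ t in nhdsWithin 0 (Ioi 0), ψ t ≤ ψ 0) : d ≤ 0 := by
  have h1 : HasDerivWithinAt ψ d (Ioi 0) 0 := hd.hasDerivWithinAt
  rw [hasDerivWithinAt_iff_tendsto_slope] at h1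
  have h2 : Ioi (0:ℝ) \ {0} = Ioi 0 := diff_singleton_eq_self (by simp)
  rw [h2] at h1
  refine le_of_tendsto h1 ?_
  filter_upwards [hev, self_mem_nhdsWithin] with t h1t h2t
  have ht : (0:ℝ) < t := h2t
  rw [slope_def_field]
  apply div_nonpos_of_nonpos_of_nonneg (by linarith) (by linarith)

theorem upperEnv_viscosity_solution {n : ℕ}
    (Ω : Set (EuclideanSpace ℝ (Fin n))) (hΩo : IsOpen Ω)
    (hΩb : Bornology.IsBounded Ω)
    (xs : EuclideanSpace ℝ (Fin n)) (hxs : xs ∈ Ω) (hΩ : StarShapedSet Ω xs)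
    (g : EuclideanSpace ℝ (Fin n) → ℝ) (hg : ContinuousOn g Ω)
    (u : EuclideanSpace ℝ (Fin n) → ℝ) (hu : u = upperStarShapedEnv Ω g xs) :
    u xs = g xs ∧
    (∀ φ : EuclideanSpace ℝ (Fin n) → ℝ, ContDiff ℝ 1 φ →
      ∀ x ∈ Ω, IsLocalMaxOn (fun y => u y - φ y) Ω x →
        min (u x - g x) (fderiv ℝ φ x (x - xs)) ≤ 0) ∧
    (∀ φ : EuclideanSpace ℝ (Fin n) → ℝ, ContDiff ℝ 1 φ →
      ∀ x ∈ Ω, IsLocalMinOn (fun y => u y - φ y) Ω x →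
        0 ≤ min (u x - g x) (fderiv ℝ φ x (x - xs))) := by
  have hseg : ∀ x ∈ Ω, segment ℝ xs x ⊆ Ω := by
    rintro x hx z ⟨a, b, ha, hb, hab, rfl⟩
    have h := hΩ x hx a ⟨ha, by linarith⟩
    have hb' : (1 : ℝ) - a = b := by linarith
    rwa [hb'] at h
  set M : EuclideanSpace ℝ (Fin n) → ℝ := fun x => sSup (g '' segment ℝ xs x) with hMdef
  have hbdd : ∀ x ∈ Ω, BddAbove (g '' segment ℝ xs x) := fun x hx =>
    ((isCompact_seg xs x).image_of_continuousOn (hg.mono (hseg x hx))).bddAbove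
  have hne : ∀ x : EuclideanSpace ℝ (Fin n), (g '' segment ℝ xs x).Nonempty :=
    fun x => (Set.nonempty_of_mem (left_mem_segment ℝ xs x)).image g
  have hgleM : ∀ x ∈ Ω, ∀ z ∈ segment ℝ xs x, g z ≤ M x := fun x hx z hz =>
    le_csSup (hbdd x hx) (mem_image_of_mem g hz)
  have hMmono : ∀ x ∈ Ω, ∀ z ∈ segment ℝ xs x, M z ≤ M x := fun x hx z hz =>
    csSup_le_csSup (hbdd x hx) (hne z)
      (image_mono (f := g) ((convex_segment xs x).segment_subset (left_mem_segment ℝ xs x) hz))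
  have hMstar : StarShapedFunOn Ω M xs := by
    intro α x hx t ht
    obtain ⟨hxΩ, hMα⟩ := hx
    have hp : t • xs + (1 - t) • x ∈ segment ℝ xs x :=
      ⟨t, 1 - t, ht.1, by linarith [ht.2], by ring, rfl⟩
    exact ⟨hseg x hxΩ hp, le_trans (hMmono x hxΩ _ hp) hMα⟩
  have hgM : ∀ x ∈ Ω, g x ≤ M x := fun x hx => hgleM x hx x (right_mem_segment ℝ xs x)
  have huM : ∀ x ∈ Ω, u x = M x := by
    intro x hx
    rw [hu]
    apply le_antisymm
    · refine csInf_le ⟨g x, ?_⟩ ⟨M, hMstar, hgM, rfl⟩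
      rintro r ⟨v, hv, hvg, rfl⟩
      exact hvg x hx
    · refine le_csInf ⟨M x, M, hMstar, hgM, rfl⟩ ?_
      rintro r ⟨v, hv, hvg, rfl⟩
      refine csSup_le (hne x) ?_
      rintro b ⟨z, hz, rfl⟩
      obtain ⟨a, b', ha, hb', hab, hz'⟩ := hz
      have hmem := hv (v x) x ⟨hx, le_rfl⟩ a ⟨ha, by linarith⟩
      have hz2 : a • xs + (1 - a) • x = z := by
        rw [show (1:ℝ) - a = b' by linarith]; exact hz'
      rw [hz2] at hmem
      exact le_trans (hvg z hmem.1) hmem.2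
  have hpt : ∀ (x : EuclideanSpace ℝ (Fin n)) (t : ℝ),
      x + t • (xs - x) = t • xs + (1 - t) • x := by
    intro x t; rw [smul_sub, sub_smul, one_smul]; abel
  have htend : ∀ x ∈ Ω, Filter.Tendsto (fun t : ℝ => x + t • (xs - x))
      (nhdsWithin 0 (Ioi 0)) (nhdsWithin x Ω) := by
    intro x hx
    rw [tendsto_nhdsWithin_iff]
    constructor
    · have hc : Continuous (fun t : ℝ => x + t • (xs - x)) := by continuity
      have h0 : Filter.Tendsto (fun t : ℝ => x + t • (xs - x)) (nhds 0) (nhds x) := by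
        simpa using hc.tendsto 0
      exact h0.mono_left nhdsWithin_le_nhds
    · filter_upwards [Ioo_mem_nhdsGT_of_mem (⟨le_rfl, one_pos⟩ : (0:ℝ) ∈ Ico 0 1)] with t ht
      exact hseg x hx ⟨t, 1 - t, ht.1.le, by linarith [ht.2], by ring, (hpt x t).symm⟩
  have hDφ : ∀ φ : EuclideanSpace ℝ (Fin n) → ℝ, ContDiff ℝ 1 φ →
      ∀ x : EuclideanSpace ℝ (Fin n),
      HasDerivAt (fun t : ℝ => φ (x + t • (xs - x))) (fderiv ℝ φ x (xs - x)) 0 := by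
    intro φ hφ x
    have h1 : HasDerivAt (fun t : ℝ => x + t • (xs - x)) (xs - x) 0 := by
      simpa using (((hasDerivAt_id (0:ℝ)).smul_const (xs - x)).const_add x)
    have h2 : HasFDerivAt φ (fderiv ℝ φ x) x := (hφ.differentiable one_ne_zero x).hasFDerivAt
    have h4 : HasFDerivAt φ (fderiv ℝ φ x) (x + (0:ℝ) • (xs - x)) := by simpa using h2
    have := h4.comp_hasDerivAt 0 h1
    exact this
  refine ⟨?_, ?_, ?_⟩
  · -- u xs = g xs
    rw [huM xs hxs, hMdef]
    simp [segment_same]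
  · -- subsolution
    intro φ hφ x hx hmaxo
    rcases le_or_gt (u x) (g x) with h | h
    · exact min_le_of_left_le (by linarith)
    · have hux : u x = M x := huM x hx
      obtain ⟨y, hyseg, hMy⟩ := (isCompact_seg xs x).exists_sSup_image_eq
        (Set.nonempty_of_mem (left_mem_segment ℝ xs x)) (hg.mono (hseg x hx))
      have hgyux : g y = u x := by rw [hux]; exact hMy.symm
      obtain ⟨a, b, ha, hb, hab, hy⟩ := hyseg
      have hapos : 0 < a := by
        rcases eq_or_lt_of_le ha with h0 | h0
        · exfalso
          have hb1 : b = 1 := by linarith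
          have hyx : y = x := by rw [← hy, ← h0, hb1]; simp
          rw [hyx] at hgyux; linarith
        · exact h0
      have ha1 : a ≤ 1 := by linarith
      have hconst : ∀ t ∈ Ioo (0:ℝ) a, u (x + t • (xs - x)) = u x := by
        rintro t ⟨ht0, hta⟩
        have ht1 : t < 1 := lt_of_lt_of_le hta ha1
        set p := x + t • (xs - x) with hp
        have hpseg : p ∈ segment ℝ xs x := ⟨t, 1 - t, ht0.le, by linarith, by ring, (hpt x t).symm⟩
        have hpΩ : p ∈ Ω := hseg x hx hpseg
        have h1t : (1:ℝ) - t ≠ 0 := ne_of_gt (by linarith)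
        have hyp : y ∈ segment ℝ xs p := by
          refine ⟨(a - t)/(1 - t), b/(1 - t), div_nonneg (by linarith) (by linarith),
            div_nonneg hb (by linarith), ?_, ?_⟩
          · field_simp
            linarith
          · rw [hp, hpt, ← hy, smul_add, smul_smul, smul_smul, ← add_assoc, ← add_smul]
            congr 1
            · congr 1
              field_simp
              linear_combination t * hab
            · congr 1
              field_simp
        have h1 : u x ≤ u p := by
          rw [hux, huM p hpΩ]
          calc M x = g y := hMy
            _ ≤ M p := hgleM p hpΩ y hyp
        have h2 : u p ≤ u x := by
          rw [huM p hpΩ, hux]; exact hMmono x hx p hpseg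
        linarith
      have hev : ∀ᶠ t in nhdsWithin 0 (Ioi (0:ℝ)),
          (fun s : ℝ => φ (x + s • (xs - x))) 0 ≤ φ (x + t • (xs - x)) := by
        have h1 := (htend x hx).eventually hmaxo
        have h2 : Ioo (0:ℝ) a ∈ nhdsWithin 0 (Ioi (0:ℝ)) :=
          Ioo_mem_nhdsGT_of_mem ⟨le_rfl, hapos⟩
        filter_upwards [h1, h2] with t h1t h2t
        have hc := hconst t h2t
        show φ (x + (0:ℝ) • (xs - x)) ≤ φ (x + t • (xs - x))
        have h0 : x + (0:ℝ) • (xs - x) = x := by simp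
        rw [h0]
        linarith
      have hd := slope_pos_lemma _ _ (hDφ φ hφ x) hev
      have hfin : (fderiv ℝ φ x) (x - xs) ≤ 0 := by
        rw [show x - xs = -(xs - x) from (neg_sub xs x).symm, map_neg]
        linarith
      exact min_le_of_right_le hfin
  · -- supersolution
    intro φ hφ x hx hmino
    have h1 : 0 ≤ u x - g x := by
      rw [huM x hx]; linarith [hgM x hx]
    have hev : ∀ᶠ t in nhdsWithin 0 (Ioi (0:ℝ)),
        φ (x + t • (xs - x)) ≤ (fun s : ℝ => φ (x + s • (xs - x))) 0 := by
      have h2 := (htend x hx).eventually hmino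
      have h3 : Ioo (0:ℝ) 1 ∈ nhdsWithin 0 (Ioi (0:ℝ)) :=
        Ioo_mem_nhdsGT_of_mem ⟨le_rfl, one_pos⟩
      filter_upwards [h2, h3] with t h2t h3t
      set p := x + t • (xs - x) with hp
      have hpseg : p ∈ segment ℝ xs x :=
        ⟨t, 1 - t, h3t.1.le, by linarith [h3t.2], by ring, (hpt x t).symm⟩
      have hpΩ : p ∈ Ω := hseg x hx hpseg
      have hup : u p ≤ u x := by
        rw [huM p hpΩ, huM x hx]; exact hMmono x hx p hpseg
      show φ (x + t • (xs - x)) ≤ φ (x + (0:ℝ) • (xs - x))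
      have h0 : x + (0:ℝ) • (xs - x) = x := by simp
      rw [h0]
      linarith
    have hd := slope_neg_lemma _ _ (hDφ φ hφ x) hev
    refine le_min h1 ?_
    rw [show x - xs = -(xs - x) from (neg_sub xs x).symm, map_neg]
    linarith
end

section
/- Let Ω ⊆ ℝⁿ be a bounded open set that is star-shaped with respect to x* ∈ Ω and let g : Ω → ℝ be continuous. If v : Ω → ℝ is a lower semicontinuous viscosity supersolution of min{ v(x) − g(x), (x − x*) · ∇v(x) } = 0 on Ω, then for every x ∈ Ω, v(x) ≥ max{ g(x* + t(x − x*)) : t ∈ [0,1] }; in particular v(x) ≥ g(x) and v(x) ≥ g(x*) for all x ∈ Ω. -/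
open Set

open Metric Filter

lemma lsc_exists_min {E : Type*} [MetricSpace E] {f : E → ℝ} {s : Set E}
    (hs : IsCompact s) (hne : s.Nonempty) (hf : LowerSemicontinuousOn f s) :
    ∃ y ∈ s, ∀ z ∈ s, f y ≤ f z := by
  by_cases hb : BddBelow (f '' s)
  · set m := sInf (f '' s) with hm
    have hmem : ∀ k : ℕ, ∃ y ∈ s, f y < m + 1/(k+1) := by
      intro k
      have h0 : (0:ℝ) < 1/(k+1) := by positivity
      have h1 : m < m + 1/(k+1) := by linarith
      obtain ⟨a, ha, hlt⟩ := exists_lt_of_csInf_lt (hne.image f) h1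
      obtain ⟨y, hy, rfl⟩ := ha
      exact ⟨y, hy, hlt⟩
    choose u hu hfu using hmem
    obtain ⟨y, hy, φ, hφ, hconv⟩ := hs.tendsto_subseq hu
    refine ⟨y, hy, fun z hz => ?_⟩
    have hmz : m ≤ f z := csInf_le hb ⟨z, hz, rfl⟩
    by_contra hcon
    push_neg at hcon
    have hmy : m < f y := lt_of_le_of_lt hmz hcon
    have hev : ∀ᶠ k in Filter.atTop, (m + f y)/2 < f (u (φ k)) := by
      have := hf y hy ((m + f y)/2) (by linarith)
      have htend : Filter.Tendsto (u ∘ φ) Filter.atTop (nhdsWithin y s) := by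
        rw [tendsto_nhdsWithin_iff]
        exact ⟨hconv, Filter.Eventually.of_forall (fun k => hu (φ k))⟩
      exact htend.eventually this
    have hev2 : ∀ᶠ k in Filter.atTop, f (u (φ k)) < (m + f y)/2 := by
      have h2 : ∀ᶠ k : ℕ in Filter.atTop, 1/((φ k : ℝ)+1) ≤ (f y - m)/2 := by
        have : Filter.Tendsto (fun k : ℕ => 1/((φ k : ℝ)+1)) Filter.atTop (nhds 0) := by
          apply Filter.Tendsto.comp tendsto_one_div_add_atTop_nhds_zero_nat
            hφ.tendsto_atTop
        exact this.eventually_le_const (by linarith)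
      filter_upwards [h2] with k hk
      calc f (u (φ k)) < m + 1/((φ k : ℝ)+1) := hfu (φ k)
        _ ≤ m + (f y - m)/2 := by linarith
        _ = (m + f y)/2 := by ring
    obtain ⟨k, h1, h2⟩ := (hev.and hev2).exists
    linarith
  · exfalso
    have hmem : ∀ k : ℕ, ∃ y ∈ s, f y < -k := by
      intro k
      by_contra hcon
      push_neg at hcon
      exact hb ⟨-k, fun a ⟨y, hy, hfy⟩ => hfy ▸ hcon y hy⟩
    choose u hu hfu using hmem
    obtain ⟨y, hy, φ, hφ, hconv⟩ := hs.tendsto_subseq hu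
    have hev : ∀ᶠ k in Filter.atTop, f y - 1 < f (u (φ k)) := by
      have := hf y hy (f y - 1) (by linarith)
      have htend : Filter.Tendsto (u ∘ φ) Filter.atTop (nhdsWithin y s) := by
        rw [tendsto_nhdsWithin_iff]
        exact ⟨hconv, Filter.Eventually.of_forall (fun k => hu (φ k))⟩
      exact htend.eventually this
    have hev2 : ∀ᶠ k in Filter.atTop, (-(φ k) : ℝ) ≤ f y - 1 := by
      have h2 : ∀ᶠ k : ℕ in Filter.atTop, (1 - f y : ℝ) ≤ φ k := by
        have := hφ.tendsto_atTop
        exact ((tendsto_natCast_atTop_atTop (R := ℝ)).comp this).eventually_ge_atTop (1 - f y)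
      filter_upwards [h2] with k hk
      linarith
    obtain ⟨k, h1, h2⟩ := (hev.and hev2).exists
    have := hfu (φ k)
    linarith


variable {n : ℕ}
local notation "E" => EuclideanSpace ℝ (Fin n)

lemma visc_at_min {Ω : Set (EuclideanSpace ℝ (Fin n))}
    {xs : EuclideanSpace ℝ (Fin n)}
    {g v : EuclideanSpace ℝ (Fin n) → ℝ}
    (hsup : ∀ φ : EuclideanSpace ℝ (Fin n) → ℝ, ContDiff ℝ 1 φ →
      ∀ x ∈ Ω, IsLocalMinOn (fun y => v y - φ y) Ω x →
        0 ≤ min (v x - g x) (fderiv ℝ φ x (x - xs)))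
    {c y₀ : EuclideanSpace ℝ (Fin n)} {ρ lam : ℝ} (hlam : 0 < lam)
    (hball : closedBall c ρ ⊆ Ω) (hy₀ : y₀ ∈ ball c ρ)
    (hmin : ∀ y ∈ closedBall c ρ, v y₀ + lam*‖y₀-c‖^2 ≤ v y + lam*‖y-c‖^2) :
    g y₀ ≤ v y₀ ∧ (inner ℝ (y₀-c) (y₀-xs) : ℝ) ≤ 0 := by
  set φ : EuclideanSpace ℝ (Fin n) → ℝ := fun y => -(lam * ‖y - c‖^2) with hφdef
  have hφ : ContDiff ℝ 1 φ :=
    (contDiff_const.mul ((contDiff_id.sub contDiff_const).norm_sq ℝ)).neg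
  have hy₀Ω : y₀ ∈ Ω := hball (ball_subset_closedBall hy₀)
  have hloc : IsLocalMinOn (fun y => v y - φ y) Ω y₀ := by
    have hb : ball c ρ ∈ nhdsWithin y₀ Ω :=
      mem_nhdsWithin_of_mem_nhds (isOpen_ball.mem_nhds hy₀)
    filter_upwards [hb] with y hy
    have := hmin y (ball_subset_closedBall hy)
    simp only [hφdef, sub_neg_eq_add]
    linarith
  have h1 : HasFDerivAt (fun y : EuclideanSpace ℝ (Fin n) => y - c)
      (ContinuousLinearMap.id ℝ (EuclideanSpace ℝ (Fin n))) y₀ :=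
    (hasFDerivAt_id y₀).sub_const c
  have h2 := h1.norm_sq
  have hD : HasFDerivAt φ
      (-(lam • (2 • ((innerSL ℝ (y₀ - c)).comp
        (ContinuousLinearMap.id ℝ (EuclideanSpace ℝ (Fin n))))))) y₀ :=
    (h2.const_mul lam).neg
  have hfd := hD.fderiv
  have key := hsup φ hφ y₀ hy₀Ω hloc
  rw [le_min_iff] at key
  obtain ⟨k1, k2⟩ := key
  constructor
  · linarith
  · rw [hfd] at k2
    simp only [ContinuousLinearMap.neg_apply, ContinuousLinearMap.smul_apply,
      ContinuousLinearMap.comp_apply, ContinuousLinearMap.id_apply, innerSL_apply_apply,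
      smul_eq_mul, nsmul_eq_mul, Nat.cast_ofNat] at k2
    nlinarith [k2]


section
variable {n : ℕ} {Ω : Set (EuclideanSpace ℝ (Fin n))} {xs : EuclideanSpace ℝ (Fin n)}
  {g v : EuclideanSpace ℝ (Fin n) → ℝ}

-- minimizer of penalized functional exists
lemma pen_min (hlsc : LowerSemicontinuousOn v Ω) {c : EuclideanSpace ℝ (Fin n)}
    {r lam : ℝ} (hr : 0 ≤ r) (hball : closedBall c r ⊆ Ω) :
    ∃ y₀ ∈ closedBall c r, ∀ y ∈ closedBall c r,
      v y₀ + lam*‖y₀-c‖^2 ≤ v y + lam*‖y-c‖^2 := by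
  have hlsc' : LowerSemicontinuousOn (fun y => v y + lam*‖y-c‖^2) (closedBall c r) := by
    apply LowerSemicontinuousOn.add (hlsc.mono hball)
    apply ContinuousOn.lowerSemicontinuousOn
    apply Continuous.continuousOn
    exact continuous_const.mul (((continuous_id.sub continuous_const).norm).pow 2)
  exact lsc_exists_min (isCompact_closedBall c r) ⟨c, mem_closedBall_self hr⟩ hlsc'

lemma v_ge_g (hΩo : IsOpen Ω) (hg : ContinuousOn g Ω)
    (hlsc : LowerSemicontinuousOn v Ω)
    (hsup : ∀ φ : EuclideanSpace ℝ (Fin n) → ℝ, ContDiff ℝ 1 φ →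
      ∀ x ∈ Ω, IsLocalMinOn (fun y => v y - φ y) Ω x →
        0 ≤ min (v x - g x) (fderiv ℝ φ x (x - xs))) :
    ∀ z ∈ Ω, g z ≤ v z := by
  intro z hz
  obtain ⟨r, hr0, hrball⟩ : ∃ r > 0, closedBall z r ⊆ Ω := by
    obtain ⟨r, hr0, h⟩ := Metric.isOpen_iff.1 hΩo z hz
    exact ⟨r/2, by linarith, (closedBall_subset_ball (by linarith)).trans h⟩
  obtain ⟨w, hw, hwmin⟩ := lsc_exists_min (isCompact_closedBall z r)
    ⟨z, mem_closedBall_self hr0.le⟩ (hlsc.mono hrball)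
  set m := v w with hm
  have hmz : m ≤ v z := hwmin z (mem_closedBall_self hr0.le)
  refine le_of_forall_pos_le_add ?_
  intro η hη
  obtain ⟨ρ₀, hρ₀, hρball⟩ := Metric.continuousWithinAt_iff.1 (hg z hz) η hη
  set ρ : ℝ := min ρ₀ r with hρdef
  have hρ0 : 0 < ρ := lt_min hρ₀ hr0
  set lam : ℝ := (v z - m + 1)/ρ^2 with hlam
  have hlam0 : 0 < lam := by
    apply div_pos (by linarith) (by positivity)
  obtain ⟨y₀, hy₀mem, hy₀min⟩ := pen_min hlsc hr0.le hrball (lam := lam)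
  have hy₀z : v y₀ + lam*‖y₀-z‖^2 ≤ v z := by
    have := hy₀min z (mem_closedBall_self hr0.le)
    simpa using this
  have hvy₀ : m ≤ v y₀ := hwmin y₀ hy₀mem
  have hnorm : ‖y₀ - z‖^2 < ρ^2 := by
    have h1 : lam * ‖y₀-z‖^2 ≤ v z - m := by linarith
    have h2 : lam * ρ^2 = v z - m + 1 := by
      rw [hlam]; field_simp [hρ0.ne']
    nlinarith [hlam0]
  have hdist : dist y₀ z < ρ := by
    rw [dist_eq_norm]
    nlinarith [norm_nonneg (y₀ - z), hρ0]
  have hy₀ball : y₀ ∈ ball z r := by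
    rw [mem_ball]
    exact lt_of_lt_of_le hdist (min_le_right _ _)
  have hy₀Ω : y₀ ∈ Ω := hrball (ball_subset_closedBall hy₀ball)
  obtain ⟨hgv, _⟩ := visc_at_min hsup hlam0 hrball hy₀ball hy₀min
  have hgz : dist (g y₀) (g z) < η := hρball hy₀Ω (lt_of_lt_of_le hdist (min_le_left _ _))
  rw [Real.dist_eq, abs_lt] at hgz
  have : v y₀ ≤ v z := by nlinarith [hlam0, sq_nonneg ‖y₀ - z‖]
  linarith


variable {x : EuclideanSpace ℝ (Fin n)}

set_option maxHeartbeats 1000000 in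
lemma v_mono_ray (hΩo : IsOpen Ω) (hx : x ∈ Ω)
    (hΩst : ∀ z ∈ Ω, ∀ t ∈ Icc (0:ℝ) 1, t • xs + (1 - t) • z ∈ Ω)
    (hlsc : LowerSemicontinuousOn v Ω)
    (hsup : ∀ φ : EuclideanSpace ℝ (Fin n) → ℝ, ContDiff ℝ 1 φ →
      ∀ z ∈ Ω, IsLocalMinOn (fun y => v y - φ y) Ω z →
        0 ≤ min (v z - g z) (fderiv ℝ φ z (z - xs)))
    {s : ℝ} (hs : s ∈ Icc (0:ℝ) 1) :
    v (xs + s • (x - xs)) ≤ v x := by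
  classical
  obtain ⟨R, hRdef⟩ : ∃ R : ℝ → EuclideanSpace ℝ (Fin n),
      R = fun t => xs + t • (x - xs) := ⟨_, rfl⟩
  obtain ⟨b, hbdef⟩ : ∃ b : ℝ, b = ‖x - xs‖ := ⟨_, rfl⟩
  have hb0 : 0 ≤ b := hbdef ▸ norm_nonneg _
  have hRmem : ∀ t ∈ Icc (0:ℝ) 1, R t ∈ Ω := by
    intro t ht
    have h := hΩst x hx (1-t) ⟨by linarith [ht.2], by linarith [ht.1]⟩
    have heq : (1-t) • xs + (1-(1-t)) • x = R t := by
      simp only [hRdef]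
      module
    rwa [heq] at h
  have hRcont : Continuous R := by
    rw [hRdef]
    exact continuous_const.add (continuous_id.smul continuous_const)
  have hRsub : ∀ t t' : ℝ, R t' - R t = (t' - t) • (x - xs) := by
    intro t t'
    simp only [hRdef]
    module
  have hScomp : IsCompact (R '' Icc 0 1) := isCompact_Icc.image hRcont
  have hSsub : R '' Icc 0 1 ⊆ Ω := by rintro _ ⟨t, ht, rfl⟩; exact hRmem t ht
  obtain ⟨δ, hδ0, hδ⟩ := hScomp.exists_thickening_subset_open hΩo hSsub
  obtain ⟨r, hrdef⟩ : ∃ r : ℝ, r = δ/2 := ⟨_, rfl⟩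
  have hr0 : 0 < r := by rw [hrdef]; positivity
  have hball : ∀ t ∈ Icc (0:ℝ) 1, closedBall (R t) r ⊆ Ω := by
    intro t ht y hy
    apply hδ
    rw [Metric.mem_thickening_iff]
    refine ⟨R t, mem_image_of_mem R ht, lt_of_le_of_lt (mem_closedBall.1 hy) (by rw [hrdef]; linarith)⟩
  obtain ⟨T, hTdef⟩ : ∃ T : Set (EuclideanSpace ℝ (Fin n)),
      T = Metric.cthickening r (R '' Icc 0 1) := ⟨_, rfl⟩
  have hTcomp : IsCompact T := by rw [hTdef]; exact hScomp.cthickening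
  have hballT : ∀ t ∈ Icc (0:ℝ) 1, closedBall (R t) r ⊆ T := by
    intro t ht
    rw [hTdef]
    exact Metric.closedBall_subset_cthickening (mem_image_of_mem R ht) r
  have hTsub : T ⊆ Ω := by
    rw [hTdef]
    refine (Metric.cthickening_subset_thickening' hδ0 (by rw [hrdef]; linarith) _).trans hδ
  have hTne : T.Nonempty :=
    ⟨R s, hTdef ▸ Metric.self_subset_cthickening _ (mem_image_of_mem R hs)⟩
  obtain ⟨w, hwT, hwmin⟩ := lsc_exists_min hTcomp hTne (hlsc.mono hTsub)
  obtain ⟨m, hmdef⟩ : ∃ m : ℝ, m = v w := ⟨_, rfl⟩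
  have hwmin' : ∀ z ∈ T, m ≤ v z := by rw [hmdef]; exact hwmin
  have hRsT : R s ∈ T := hTdef ▸ Metric.self_subset_cthickening _ (mem_image_of_mem R hs)
  obtain ⟨C, hCdef⟩ : ∃ C : ℝ, C = v (R s) - m := ⟨_, rfl⟩
  have hC : 0 ≤ C := by rw [hCdef]; linarith [hwmin' _ hRsT]
  have hgoal : xs + s • (x - xs) = R s := by rw [hRdef]
  rw [hgoal]
  refine le_of_forall_pos_le_add ?_
  intro η hη
  have hlscRs := hlsc (R s) (hRmem s hs) (v (R s) - η/2) (by linarith)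
  obtain ⟨ρ, hρ0, hρ⟩ := Metric.mem_nhdsWithin_iff.1 hlscRs
  obtain ⟨ε, hεdef⟩ : ∃ ε : ℝ, ε = min (ρ^2/(2*(C+1))) (r^2/(4*(C+1))) := ⟨_, rfl⟩
  have hε0 : 0 < ε := by
    rw [hεdef]
    exact lt_min (by positivity) (by positivity)
  have hεC1 : ε*(C+1) ≤ ρ^2/2 := by
    have h : ε ≤ ρ^2/(2*(C+1)) := hεdef ▸ min_le_left _ _
    calc ε*(C+1) ≤ (ρ^2/(2*(C+1)))*(C+1) := by nlinarith
      _ = ρ^2/2 := by field_simp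
  have hεC2 : ε*(C+1) ≤ r^2/4 := by
    have h : ε ≤ r^2/(4*(C+1)) := hεdef ▸ min_le_right _ _
    calc ε*(C+1) ≤ (r^2/(4*(C+1)))*(C+1) := by nlinarith
      _ = r^2/4 := by field_simp
  have hεC : ε*C < ρ^2 := by nlinarith
  have hvRs : v (R s) = m + C := by rw [hCdef]; ring
  have h4ε : 0 < 4*ε := by linarith
  have hrε : v (R s) ≤ m + r^2/(4*ε) := by
    have hC1 : C + 1 ≤ r^2/(4*ε) := by
      rw [le_div_iff₀ h4ε]
      nlinarith
    linarith
  obtain ⟨lam, hlamdef⟩ : ∃ lam : ℝ, lam = 1/ε := ⟨_, rfl⟩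
  have hlam0 : 0 < lam := by rw [hlamdef]; positivity
  -- choose N
  obtain ⟨N, hN⟩ := exists_nat_ge (max (max ((1-s)^2*b^2/(ε*(η/2))) (2*(1-s)*b/r)) 1)
  have hN1 : 1 ≤ (N:ℝ) := le_trans (le_max_right _ _) hN
  have hN0 : 0 < (N:ℝ) := by linarith
  have hNne : (N:ℝ) ≠ 0 := hN0.ne'
  have hNa1 : (1-s)^2*b^2/(ε*(η/2)) ≤ N :=
    le_trans ((le_max_left _ _).trans (le_max_left _ 1)) hN
  have hNa2 : 2*(1-s)*b/r ≤ N :=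
    le_trans ((le_max_right _ _).trans (le_max_left _ 1)) hN
  obtain ⟨Δ, hΔdef⟩ : ∃ Δ : ℝ, Δ = (1-s)/N := ⟨_, rfl⟩
  have hΔ0 : 0 ≤ Δ := by
    rw [hΔdef]
    exact div_nonneg (by linarith [hs.2]) hN0.le
  have hΔb : Δ*b ≤ r/2 := by
    rw [div_le_iff₀ hr0] at hNa2
    rw [hΔdef, div_mul_eq_mul_div, div_le_iff₀ hN0]
    nlinarith
  have herr : (N:ℝ)*(Δ^2*b^2*lam) ≤ η/2 := by
    have hεη : 0 < ε*(η/2) := by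
      apply mul_pos hε0; linarith
    have h1 : (1-s)^2*b^2 ≤ (N:ℝ)*(ε*(η/2)) := by
      rw [div_le_iff₀ hεη] at hNa1
      linarith
    have h2 : (N:ℝ)*(Δ^2*b^2*lam) = ((1-s)^2*b^2)/(N*ε) := by
      rw [hΔdef, hlamdef]
      field_simp
    rw [h2, div_le_iff₀ (mul_pos hN0 hε0)]
    linarith
  obtain ⟨tk, htkdef⟩ : ∃ tk : ℕ → ℝ, tk = fun k : ℕ => s + (k:ℝ)*Δ := ⟨_, rfl⟩
  have htk_mem : ∀ k : ℕ, k ≤ N → tk k ∈ Icc (0:ℝ) 1 := by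
    intro k hk
    have hkΔ : 0 ≤ (k:ℝ)*Δ := mul_nonneg (Nat.cast_nonneg k) hΔ0
    have hkN : (k:ℝ) ≤ N := Nat.cast_le.2 hk
    have hup : (k:ℝ)*Δ ≤ N*Δ := by nlinarith
    have hNΔ : (N:ℝ)*Δ = 1-s := by
      rw [hΔdef]
      field_simp
    simp only [htkdef]
    constructor
    · linarith [hs.1]
    · linarith
  have htkN : tk N = 1 := by
    have hNΔ : (N:ℝ)*Δ = 1-s := by
      rw [hΔdef]; field_simp
    simp only [htkdef]
    linarith
  have htk0 : tk 0 = s := by simp [htkdef]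
  have htkpos : ∀ k : ℕ, 1 ≤ k → 0 < tk k := by
    intro k hk
    have hk1 : (1:ℝ) ≤ (k:ℝ) := by exact_mod_cast hk
    have hkΔ : Δ ≤ (k:ℝ)*Δ := by nlinarith
    have hsΔ : 0 < s + Δ := by
      rcases hs.1.lt_or_eq with h | h
      · linarith
      · rw [hΔdef, ← h]
        simp only [sub_zero, zero_add]
        positivity
    simp only [htkdef]
    linarith
  have htkstep : ∀ k : ℕ, tk (k+1) = tk k + Δ := by
    intro k
    simp only [htkdef]
    push_cast
    ring
  -- minimizers
  have hminex : ∀ k : ℕ, ∃ y, k ≤ N → y ∈ closedBall (R (tk k)) r ∧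
      ∀ z ∈ closedBall (R (tk k)) r,
        v y + lam*‖y - R (tk k)‖^2 ≤ v z + lam*‖z - R (tk k)‖^2 := by
    intro k
    by_cases hk : k ≤ N
    · obtain ⟨y₀, h1, h2⟩ := pen_min hlsc hr0.le (hball _ (htk_mem k hk)) (lam := lam)
      exact ⟨y₀, fun _ => ⟨h1, h2⟩⟩
    · exact ⟨xs, fun h => absurd h hk⟩
  choose y hy using hminex
  obtain ⟨u, hudef⟩ : ∃ u : ℕ → ℝ, u = fun k => v (y k) + lam*‖y k - R (tk k)‖^2 := ⟨_, rfl⟩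
  have he0 : 0 ≤ Δ^2*b^2*lam := by
    apply mul_nonneg (mul_nonneg (sq_nonneg _) (sq_nonneg _)) hlam0.le
  -- step lemma
  have step : ∀ k : ℕ, k < N →
      u k - Δ^2*b^2*lam ≤ u (k+1) ∨ m + r^2/(4*ε) ≤ u (k+1) := by
    intro k hkN
    obtain ⟨hy'mem, hy'min⟩ := hy (k+1) (Nat.succ_le_of_lt hkN)
    obtain ⟨hymem, hymin⟩ := hy k hkN.le
    obtain ⟨p, hpdef⟩ : ∃ p : EuclideanSpace ℝ (Fin n),
        p = y (k+1) - R (tk (k+1)) := ⟨_, rfl⟩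
    have hpnorm : ‖p‖ ≤ r := by
      rw [hpdef, ← dist_eq_norm]
      exact mem_closedBall.1 hy'mem
    have hdiff : y (k+1) - R (tk k) = p + Δ • (x - xs) := by
      have h1 : y (k+1) - R (tk k) = p + (R (tk (k+1)) - R (tk k)) := by
        rw [hpdef]; abel
      rw [h1, hRsub (tk k) (tk (k+1)), htkstep k]
      congr 1
      ring_nf
    by_cases hcase : ‖p‖ ≤ r - Δ*b
    · left
      -- inner product sign
      have hA : Δ * (inner ℝ p (x - xs) : ℝ) ≤ 0 := by
        rcases eq_or_lt_of_le hΔ0 with hΔeq | hΔpos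
        · rw [← hΔeq]; simp
        rcases eq_or_lt_of_le hb0 with hbeq | hbpos
        · have hxxs : x - xs = 0 := by
            rw [hbdef] at hbeq
            exact norm_eq_zero.1 hbeq.symm
          rw [hxxs, inner_zero_right]; simp
        have hpball : y (k+1) ∈ ball (R (tk (k+1))) r := by
          rw [mem_ball, dist_eq_norm, ← hpdef]
          have := mul_pos hΔpos hbpos
          linarith
        obtain ⟨-, hinner⟩ := visc_at_min hsup hlam0
          (hball _ (htk_mem (k+1) (Nat.succ_le_of_lt hkN))) hpball hy'min
        have hdecomp : y (k+1) - xs = p + (tk (k+1)) • (x - xs) := by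
          have h1 : y (k+1) - xs = p + (R (tk (k+1)) - xs) := by
            rw [hpdef]; abel
          rw [h1]
          congr 1
          simp only [hRdef]
          module
        rw [hdecomp, ← hpdef, inner_add_right, real_inner_smul_right] at hinner
        have hself : (0:ℝ) ≤ inner ℝ p p := real_inner_self_nonneg
        have htpos : 0 < tk (k+1) := htkpos (k+1) (Nat.le_add_left 1 k)
        have hinnle : (inner ℝ p (x - xs) : ℝ) ≤ 0 := by
          by_contra hcon
          push_neg at hcon
          have := mul_pos htpos hcon
          linarith
        have := mul_le_mul_of_nonneg_left hinnle hΔ0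
        simpa using this
      -- compare u k with value of y(k+1) at time tk k
      have hmem2 : y (k+1) ∈ closedBall (R (tk k)) r := by
        rw [mem_closedBall, dist_eq_norm, hdiff]
        calc ‖p + Δ • (x - xs)‖ ≤ ‖p‖ + ‖Δ • (x - xs)‖ := norm_add_le _ _
          _ = ‖p‖ + Δ*b := by
              rw [norm_smul, Real.norm_eq_abs, abs_of_nonneg hΔ0, hbdef]
          _ ≤ r := by linarith
      have hcomp := hymin _ hmem2
      have hexpand : ‖y (k+1) - R (tk k)‖^2
          = ‖p‖^2 + 2*(Δ*(inner ℝ p (x - xs) : ℝ)) + Δ^2*b^2 := by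
        rw [hdiff, norm_add_sq_real, real_inner_smul_right, norm_smul,
          Real.norm_eq_abs, abs_of_nonneg hΔ0, hbdef]
        ring
      have hcomp2 : u k ≤ v (y (k+1))
          + (lam*‖p‖^2 + lam*(2*(Δ*(inner ℝ p (x - xs) : ℝ))) + lam*(Δ^2*b^2)) := by
        have h3 : lam*‖y (k+1) - R (tk k)‖^2
            = lam*‖p‖^2 + lam*(2*(Δ*(inner ℝ p (x - xs) : ℝ))) + lam*(Δ^2*b^2) := by
          rw [hexpand]; ring
        rw [← h3]
        simp only [hudef]
        exact hcomp
      have hup : u (k+1) = v (y (k+1)) + lam*‖p‖^2 := by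
        simp only [hudef, hpdef]
      have hmid : lam*(2*(Δ*(inner ℝ p (x - xs) : ℝ))) ≤ 0 := by
        apply mul_nonpos_of_nonneg_of_nonpos hlam0.le
        linarith
      have hlast : lam*(Δ^2*b^2) = Δ^2*b^2*lam := by ring
      rw [hup]
      linarith [hcomp2, hmid]
    · right
      push_neg at hcase
      have hvm : m ≤ v (y (k+1)) :=
        hwmin' _ (hballT _ (htk_mem (k+1) (Nat.succ_le_of_lt hkN)) hy'mem)
      have h1 : r/2 ≤ r - Δ*b := by linarith
      have h2 : (r/2)^2 ≤ ‖p‖^2 := by nlinarith [norm_nonneg p]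
      have hup : u (k+1) = v (y (k+1)) + lam*‖p‖^2 := by
        simp only [hudef, hpdef]
      have hr4 : r^2/(4*ε) = lam*(r/2)^2 := by
        rw [hlamdef]; field_simp; ring
      have h3 : lam*(r/2)^2 ≤ lam*‖p‖^2 := mul_le_mul_of_nonneg_left h2 hlam0.le
      rw [hup, hr4]
      linarith
  -- induction
  have main : ∀ k : ℕ, k ≤ N →
      min (u 0) (m + r^2/(4*ε)) - k*(Δ^2*b^2*lam) ≤ u k := by
    intro k
    induction k with
    | zero => intro _; simpa using min_le_left (u 0) (m + r^2/(4*ε))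
    | succ k ih =>
      intro hk1
      have hkN : k < N := hk1
      have hke : 0 ≤ ((k:ℝ)+1)*(Δ^2*b^2*lam) :=
        mul_nonneg (by positivity) he0
      have hc : ((k+1 : ℕ):ℝ) = (k:ℝ)+1 := by push_cast; ring
      rw [hc]
      rcases step k hkN with hstep | hstep
      · have h := ih hkN.le
        linarith
      · have hminle : min (u 0) (m + r^2/(4*ε)) ≤ m + r^2/(4*ε) := min_le_right _ _
        linarith
  -- bound u 0 from below
  have hu0 : v (R s) - η/2 ≤ u 0 := by
    obtain ⟨hy0mem, hy0min⟩ := hy 0 (Nat.zero_le N)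
    rw [htk0] at hy0mem hy0min
    have hcomp := hy0min (R s) (mem_closedBall_self hr0.le)
    rw [sub_self, norm_zero] at hcomp
    have hcomp' : v (y 0) + lam*‖y 0 - R s‖^2 ≤ v (R s) := by
      simpa using hcomp
    have hvy0 : m ≤ v (y 0) := hwmin' _ (hballT s hs hy0mem)
    have hnorm2 : ‖y 0 - R s‖^2 ≤ ε*C := by
      have h1 : lam*‖y 0 - R s‖^2 ≤ C := by
        rw [hCdef]; linarith
      rw [hlamdef, div_mul_eq_mul_div, div_le_iff₀ hε0] at h1
      linarith
    have hdist : dist (y 0) (R s) < ρ := by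
      rw [dist_eq_norm]
      have hsq : ‖y 0 - R s‖^2 < ρ^2 := lt_of_le_of_lt hnorm2 hεC
      exact lt_of_pow_lt_pow_left₀ 2 hρ0.le hsq
    have hy0Ω : y 0 ∈ Ω := hball s hs hy0mem
    have hlow : v (R s) - η/2 < v (y 0) := hρ ⟨mem_ball.2 hdist, hy0Ω⟩
    have hvu : v (y 0) ≤ u 0 := by
      simp only [hudef, htk0]
      have := mul_nonneg hlam0.le (sq_nonneg ‖y 0 - R s‖)
      linarith
    linarith
  -- final
  have hlastN : u N ≤ v x := by
    obtain ⟨hyNmem, hyNmin⟩ := hy N le_rfl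
    have hR1 : R (tk N) = x := by
      rw [htkN, hRdef]
      simp
    have hxmem : x ∈ closedBall (R (tk N)) r := by
      rw [hR1]; exact mem_closedBall_self hr0.le
    have hcomp := hyNmin x hxmem
    rw [hR1, sub_self, norm_zero] at hcomp
    have : u N ≤ v x + lam*0^2 := by
      simp only [hudef]
      rw [hR1]
      exact hcomp
    simpa using this
  have hmain := main N le_rfl
  have hminlow : v (R s) - η/2 ≤ min (u 0) (m + r^2/(4*ε)) :=
    le_min (by linarith) (by linarith)
  linarith

end

theorem supersolution_above_ray_max {n : ℕ}
    (Ω : Set (EuclideanSpace ℝ (Fin n))) (hΩo : IsOpen Ω)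
    (hΩb : Bornology.IsBounded Ω)
    (xs : EuclideanSpace ℝ (Fin n)) (hxs : xs ∈ Ω) (hΩ : StarShapedSet Ω xs)
    (g : EuclideanSpace ℝ (Fin n) → ℝ) (hg : ContinuousOn g Ω)
    (v : EuclideanSpace ℝ (Fin n) → ℝ) (hlsc : LowerSemicontinuousOn v Ω)
    (hsup : ∀ φ : EuclideanSpace ℝ (Fin n) → ℝ, ContDiff ℝ 1 φ →
      ∀ x ∈ Ω, IsLocalMinOn (fun y => v y - φ y) Ω x →
        0 ≤ min (v x - g x) (fderiv ℝ φ x (x - xs))) :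
    ∀ x ∈ Ω,
      sSup ((fun t : ℝ => g (xs + t • (x - xs))) '' Icc (0 : ℝ) 1) ≤ v x ∧
      g x ≤ v x ∧ g xs ≤ v x := by
  intro x hx
  have hvg : ∀ z ∈ Ω, g z ≤ v z := v_ge_g hΩo hg hlsc hsup
  have hmono : ∀ s ∈ Icc (0:ℝ) 1, v (xs + s • (x - xs)) ≤ v x :=
    fun s hs => v_mono_ray hΩo hx hΩ hlsc hsup hs
  have hmem : ∀ t ∈ Icc (0:ℝ) 1, xs + t • (x - xs) ∈ Ω := by
    intro t ht
    have h := hΩ x hx (1-t) ⟨by linarith [ht.2], by linarith [ht.1]⟩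
    have heq : (1-t) • xs + (1-(1-t)) • x = xs + t • (x - xs) := by module
    rwa [heq] at h
  have hray : ∀ t ∈ Icc (0:ℝ) 1, g (xs + t • (x - xs)) ≤ v x := fun t ht =>
    le_trans (hvg _ (hmem t ht)) (hmono t ht)
  have h1mem : (1:ℝ) ∈ Icc (0:ℝ) 1 := ⟨zero_le_one, le_refl 1⟩
  have h0mem : (0:ℝ) ∈ Icc (0:ℝ) 1 := ⟨le_refl 0, zero_le_one⟩
  refine ⟨?_, ?_, ?_⟩
  · apply csSup_le
    · exact ⟨g (xs + (0:ℝ) • (x - xs)), mem_image_of_mem _ h0mem⟩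
    · rintro _ ⟨t, ht, rfl⟩
      exact hray t ht
  · have := hray 1 h1mem
    simpa using this
  · have := hray 0 h0mem
    simpa using this
end

section
/- Let Ω ⊆ ℝⁿ be compact and star-shaped with respect to each of the points x*_1, …, x*_r ∈ Ω, and let g : Ω → ℝ be continuous. Then the upper star-shaped envelope of g with respect to {x*_1, …, x*_r} equals the pointwise minimum of the upper star-shaped envelopes with respect to the individual points: SS⁺_{{x*_1,…,x*_r}}(g)(x) = min over i = 1,…,r of SS⁺_{x*_i}(g)(x) for all x ∈ Ω. -/
open Set

/-- A set `S` is star-shaped with respect to the finite family of points `c i`. -/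
def StarShapedSetMulti {n r : ℕ} (S : Set (EuclideanSpace ℝ (Fin n)))
    (c : Fin r → EuclideanSpace ℝ (Fin n)) : Prop :=
  ∀ y ∈ S, ∃ i : Fin r, ∀ t ∈ Icc (0 : ℝ) 1, t • y + (1 - t) • c i ∈ S

/-- A function `u` on `Ω` is star-shaped with respect to the family `c` if all of its
sublevel sets (within `Ω`) are star-shaped with respect to the family `c`. -/
def StarShapedFunMultiOn {n r : ℕ} (Ω : Set (EuclideanSpace ℝ (Fin n)))
    (u : EuclideanSpace ℝ (Fin n) → ℝ) (c : Fin r → EuclideanSpace ℝ (Fin n)) : Prop :=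
  ∀ α : ℝ, StarShapedSetMulti {x ∈ Ω | u x ≤ α} c

/-- The upper star-shaped envelope of `g` with respect to the family `c` on `Ω`. -/
noncomputable def upperStarShapedEnvMulti {n r : ℕ} (Ω : Set (EuclideanSpace ℝ (Fin n)))
    (g : EuclideanSpace ℝ (Fin n) → ℝ) (c : Fin r → EuclideanSpace ℝ (Fin n))
    (x : EuclideanSpace ℝ (Fin n)) : ℝ :=
  sInf {s : ℝ | ∃ v : EuclideanSpace ℝ (Fin n) → ℝ,
    StarShapedFunMultiOn Ω v c ∧ (∀ y ∈ Ω, g y ≤ v y) ∧ v x = s}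

private lemma seg_comb {n : ℕ} (x c : EuclideanSpace ℝ (Fin n)) (s t : ℝ) :
    s • c + (1 - s) • (t • x + (1 - t) • c)
      = ((1 - s) * t) • x + (1 - (1 - s) * t) • c := by
  module

theorem upperEnvMulti_eq_min_of_upperEnvs {n r : ℕ} (hr : 0 < r)
    (Ω : Set (EuclideanSpace ℝ (Fin n))) (hΩc : IsCompact Ω)
    (c : Fin r → EuclideanSpace ℝ (Fin n)) (hc : ∀ i, c i ∈ Ω)
    (hΩ : ∀ i, StarShapedSet Ω (c i))
    (g : EuclideanSpace ℝ (Fin n) → ℝ) (hg : ContinuousOn g Ω) :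
    ∀ x ∈ Ω, upperStarShapedEnvMulti Ω g c x = ⨅ i : Fin r, upperStarShapedEnv Ω g (c i) x := by
  classical
  intro x hx
  obtain ⟨C, hC⟩ : ∃ C, ∀ y ∈ Ω, g y ≤ C := by
    obtain ⟨C, hC⟩ := hΩc.exists_bound_of_continuousOn hg
    exact ⟨C, fun y hy => (le_abs_self _).trans (by simpa using hC y hy)⟩
  set i0 : Fin r := ⟨0, hr⟩
  haveI : Nonempty (Fin r) := ⟨i0⟩
  set SM : Set ℝ := {s : ℝ | ∃ v : EuclideanSpace ℝ (Fin n) → ℝ,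
    StarShapedFunMultiOn Ω v c ∧ (∀ y ∈ Ω, g y ≤ v y) ∧ v x = s} with hSM
  set SI : Fin r → Set ℝ := fun i => {s : ℝ | ∃ v : EuclideanSpace ℝ (Fin n) → ℝ,
    StarShapedFunOn Ω v (c i) ∧ (∀ y ∈ Ω, g y ≤ v y) ∧ v x = s} with hSI
  have lbM : ∀ s ∈ SM, g x ≤ s := by
    rintro s ⟨v, _, hvg, rfl⟩; exact hvg x hx
  have lbI : ∀ i : Fin r, ∀ s ∈ SI i, g x ≤ s := by
    rintro i s ⟨v, _, hvg, rfl⟩; exact hvg x hx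
  have neI : ∀ i : Fin r, (SI i).Nonempty := by
    intro i
    refine ⟨C, fun _ => C, ?_, hC, rfl⟩
    intro α z hz t ht
    exact ⟨hΩ i z hz.1 t ht, hz.2⟩
  have neM : SM.Nonempty := by
    refine ⟨C, fun _ => C, ?_, hC, rfl⟩
    intro α y hy
    refine ⟨i0, fun t ht => ?_⟩
    have h := hΩ i0 y hy.1 (1 - t) ⟨by linarith [ht.2], by linarith [ht.1]⟩
    rw [sub_sub_cancel] at h
    exact ⟨by rwa [add_comm] at h, hy.2⟩
  have hmulti : upperStarShapedEnvMulti Ω g c x = sInf SM := rfl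
  have hsingle : ∀ i, upperStarShapedEnv Ω g (c i) x = sInf (SI i) := fun i => rfl
  rw [hmulti]
  apply le_antisymm
  · -- sInf SM ≤ ⨅ i, env i
    refine le_ciInf fun i => ?_
    rw [hsingle i]
    refine csInf_le_csInf ⟨g x, lbM⟩ (neI i) ?_
    rintro s ⟨v, hv, hvg, rfl⟩
    refine ⟨v, ?_, hvg, rfl⟩
    intro α y hy
    refine ⟨i, fun t ht => ?_⟩
    have h := hv α y hy (1 - t) ⟨by linarith [ht.2], by linarith [ht.1]⟩
    rw [sub_sub_cancel] at h
    rwa [add_comm] at h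
  · -- ⨅ ≤ sInf SM
    refine le_csInf neM ?_
    rintro s ⟨v, hv, hvg, rfl⟩
    obtain ⟨i, hseg⟩ := hv (v x) x ⟨hx, le_rfl⟩
    set seg : Set (EuclideanSpace ℝ (Fin n)) :=
      {z | ∃ t ∈ Icc (0:ℝ) 1, z = t • x + (1 - t) • c i} with hsegdef
    have hsegΩ : ∀ z ∈ seg, z ∈ Ω ∧ v z ≤ v x := by
      rintro z ⟨t, ht, rfl⟩
      exact ⟨(hseg t ht).1, (hseg t ht).2⟩
    set M' : ℝ := max C (v x) with hM'
    set w : EuclideanSpace ℝ (Fin n) → ℝ := fun y => if y ∈ seg then v x else M' with hw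
    have hwx : w x = v x := by
      have : x ∈ seg := ⟨1, ⟨zero_le_one, le_rfl⟩, by simp⟩
      simp [hw, this]
    have hwg : ∀ y ∈ Ω, g y ≤ w y := by
      intro y hy
      by_cases h : y ∈ seg
      · have := hsegΩ y h
        simp only [hw, if_pos h]
        exact (hvg y hy).trans this.2
      · simp only [hw, if_neg h]
        exact (hC y hy).trans (le_max_left _ _)
    have hwstar : StarShapedFunOn Ω w (c i) := by
      intro α z hz t' ht'
      obtain ⟨hzΩ, hzα⟩ := hz
      by_cases h : z ∈ seg
      · have hvxα : v x ≤ α := by simpa only [hw, if_pos h] using hzα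
        obtain ⟨t, ht, rfl⟩ := h
        have hmem : t' • c i + (1 - t') • (t • x + (1 - t) • c i) ∈ seg := by
          rw [seg_comb]
          exact ⟨(1 - t') * t, ⟨mul_nonneg (by linarith [ht'.2]) ht.1,
            by nlinarith [ht'.1, ht'.2, ht.1, ht.2]⟩, rfl⟩
        refine ⟨(hsegΩ _ hmem).1, ?_⟩
        simp only [hw, if_pos hmem]
        exact hvxα
      · have hM'α : M' ≤ α := by simpa [hw, h] using hzα
        refine ⟨hΩ i z hzΩ t' ht', ?_⟩
        by_cases h2 : t' • c i + (1 - t') • z ∈ seg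
        · simp only [hw, if_pos h2]
          exact (le_max_right C (v x)).trans hM'α
        · simp only [hw, if_neg h2]
          exact hM'α
    have henv : upperStarShapedEnv Ω g (c i) x ≤ v x := by
      rw [hsingle i]
      exact csInf_le ⟨g x, lbI i⟩ ⟨w, hwstar, hwg, hwx⟩
    exact le_trans (ciInf_le ((Set.finite_range _).bddBelow) i) henv
end

section
/- Let Ω ⊆ ℝⁿ be compact and star-shaped with respect to each of the points x*_1, …, x*_r ∈ Ω, and let g : Ω → ℝ be continuous. Then the upper star-shaped envelope of g with respect to {x*_1, …, x*_r} satisfies the explicit formula SS⁺_{{x*_1,…,x*_r}}(g)(x) = min over i = 1,…,r of ( max{ g(x*_i + t(x − x*_i)) : t ∈ [0,1] } ) for all x ∈ Ω. -/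
open Set

theorem upperEnvMulti_explicit {n r : ℕ} (hr : 0 < r)
    (Ω : Set (EuclideanSpace ℝ (Fin n))) (hΩc : IsCompact Ω)
    (c : Fin r → EuclideanSpace ℝ (Fin n)) (hc : ∀ i, c i ∈ Ω)
    (hΩ : ∀ i, StarShapedSet Ω (c i))
    (g : EuclideanSpace ℝ (Fin n) → ℝ) (hg : ContinuousOn g Ω) :
    ∀ x ∈ Ω, upperStarShapedEnvMulti Ω g c x =
      ⨅ i : Fin r, sSup ((fun t : ℝ => g (c i + t • (x - c i))) '' Icc (0 : ℝ) 1) := by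

  intro x hx
  haveI : Nonempty (Fin r) := ⟨⟨0, hr⟩⟩
  have hK : BddAbove (g '' Ω) := (hΩc.image_of_continuousOn hg).bddAbove
  set M : Fin r → EuclideanSpace ℝ (Fin n) → ℝ :=
    fun i y => sSup ((fun t : ℝ => g (c i + t • (y - c i))) '' Icc (0 : ℝ) 1) with hMdef
  have hseg : ∀ i, ∀ y ∈ Ω, ∀ t ∈ Icc (0:ℝ) 1, c i + t • (y - c i) ∈ Ω := by
    intro i y hy t ht
    have h1 := hΩ i y hy (1 - t) ⟨by linarith [ht.2], by linarith [ht.1]⟩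
    have he : (1 - t) • c i + (1 - (1 - t)) • y = c i + t • (y - c i) := by module
    rwa [he] at h1
  have hbdd : ∀ i, ∀ y ∈ Ω, BddAbove ((fun t : ℝ => g (c i + t • (y - c i))) '' Icc (0:ℝ) 1) := by
    intro i y hy
    exact hK.mono (by rintro _ ⟨t, ht, rfl⟩; exact ⟨_, hseg i y hy t ht, rfl⟩)
  have hne : ∀ i (y : EuclideanSpace ℝ (Fin n)),
      ((fun t : ℝ => g (c i + t • (y - c i))) '' Icc (0:ℝ) 1).Nonempty :=
    fun i y => ⟨_, ⟨0, ⟨le_refl 0, zero_le_one⟩, rfl⟩⟩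
  have hgM : ∀ i, ∀ y ∈ Ω, g y ≤ M i y := by
    intro i y hy
    have he : g y = (fun t : ℝ => g (c i + t • (y - c i))) 1 := by
      show g y = g (c i + (1:ℝ) • (y - c i)); congr 1; module
    rw [he]
    exact le_csSup (hbdd i y hy) ⟨1, ⟨zero_le_one, le_refl 1⟩, rfl⟩
  set h : EuclideanSpace ℝ (Fin n) → ℝ := fun y => ⨅ i, M i y with hhdef
  have hbb : ∀ y, BddBelow (Set.range fun i => M i y) := fun y => (Set.finite_range _).bddBelow
  have hgh : ∀ y ∈ Ω, g y ≤ h y := fun y hy => le_ciInf fun i => hgM i y hy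
  have hMono : ∀ i, ∀ y ∈ Ω, ∀ t ∈ Icc (0:ℝ) 1, M i (c i + t • (y - c i)) ≤ M i y := by
    intro i y hy t ht
    apply csSup_le (hne i _)
    rintro _ ⟨s, hs, rfl⟩
    show g (c i + s • (c i + t • (y - c i) - c i)) ≤ M i y
    have he : c i + s • (c i + t • (y - c i) - c i) = c i + (s * t) • (y - c i) := by module
    rw [he]
    exact le_csSup (hbdd i y hy) ⟨s * t, ⟨mul_nonneg hs.1 ht.1,
      mul_le_one₀ hs.2 ht.1 ht.2⟩, rfl⟩
  have hstar : StarShapedFunMultiOn Ω h c := by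
    intro α y hy
    obtain ⟨hyΩ, hyα⟩ := hy
    obtain ⟨i, hi⟩ := Finite.exists_min (fun i => M i y)
    refine ⟨i, fun t ht => ?_⟩
    have he : t • y + (1 - t) • c i = c i + t • (y - c i) := by module
    rw [he]
    refine ⟨hseg i y hyΩ t ht, ?_⟩
    calc h (c i + t • (y - c i)) ≤ M i (c i + t • (y - c i)) := ciInf_le (hbb _) i
      _ ≤ M i y := hMono i y hyΩ t ht
      _ ≤ α := (le_ciInf hi).trans hyα
  have hmem : h x ∈ {s : ℝ | ∃ v : EuclideanSpace ℝ (Fin n) → ℝ,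
      StarShapedFunMultiOn Ω v c ∧ (∀ y ∈ Ω, g y ≤ v y) ∧ v x = s} := ⟨h, hstar, hgh, rfl⟩
  have hlb : ∀ s ∈ {s : ℝ | ∃ v : EuclideanSpace ℝ (Fin n) → ℝ,
      StarShapedFunMultiOn Ω v c ∧ (∀ y ∈ Ω, g y ≤ v y) ∧ v x = s}, h x ≤ s := by
    rintro s ⟨v, hv, hvg, rfl⟩
    obtain ⟨i, hi⟩ := hv (v x) x ⟨hx, le_refl _⟩
    have hMvx : M i x ≤ v x := by
      apply csSup_le (hne i x)
      rintro _ ⟨t, ht, rfl⟩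
      show g (c i + t • (x - c i)) ≤ v x
      have he : c i + t • (x - c i) = t • x + (1 - t) • c i := by module
      rw [he]
      obtain ⟨hzΩ, hzv⟩ := hi t ht
      exact (hvg _ hzΩ).trans hzv
    exact (ciInf_le (hbb x) i).trans hMvx
  have heq : upperStarShapedEnvMulti Ω g c x = h x :=
    le_antisymm (csInf_le ⟨h x, hlb⟩ hmem) (le_csInf ⟨_, hmem⟩ hlb)
  rw [heq]
end
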